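/- arXiv:1603.03813 — 6 statements merged into one kernel-verified Lean document; each statement's English description precedes it below -/
import Mathlib

section
/- For any non-negative multiplicative function g and x ≥ 1, the sum of g(n)/n over n ≤ x is at most exp(Σ_{q ≤ x} g(q)/q), where q runs over prime powers at most x. -/
/-!
With `f n = g n / n`, again non-negative and multiplicative, split each `n ≤ N` into its `p`-part
and its `p`-free part, one prime `p ≤ N` at a time. Since `f ≥ 0`, this bounds `∑_{n ≤ N} f n` by
the product over primes `p ≤ N` of `1 + ∑_{1 ≤ k, p^k ≤ N} f (p^k)`, and `1 + t ≤ exp t` turns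
that product into the exponential of the sum over prime powers `q ≤ N`.
-/

open Finset

def factoredUpTo (N : ℕ) (P : Finset ℕ) : Finset ℕ := {n ∈ Icc 1 N | n.primeFactors ⊆ P}

def primePowersLE (N : ℕ) : Finset ℕ := {q ∈ range (N + 1) | IsPrimePow q}

lemma mem_factoredUpTo {N n : ℕ} {P : Finset ℕ} :
    n ∈ factoredUpTo N P ↔ (1 ≤ n ∧ n ≤ N) ∧ n.primeFactors ⊆ P := by
  simp [factoredUpTo]

lemma factoredUpTo_empty_subset (N : ℕ) : factoredUpTo N ∅ ⊆ {1} := by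
  intro n hn
  rw [mem_factoredUpTo, subset_empty, Nat.primeFactors_eq_empty] at hn
  rw [mem_singleton]
  omega

lemma factoredUpTo_primesLE (N : ℕ) : factoredUpTo N (Nat.primesLE N) = Icc 1 N :=
  filter_true_of_mem fun _ hn _ hp => Nat.mem_primesLE.mpr
    ⟨(Nat.le_of_mem_primeFactors hp).trans (mem_Icc.mp hn).2, Nat.prime_of_mem_primeFactors hp⟩

lemma factoredUpTo_singleton_subset (N p : ℕ) :
    factoredUpTo N {p} ⊆ insert 1 {q ∈ primePowersLE N | q.minFac = p} := by
  intro n hn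
  obtain ⟨⟨h1n, hnN⟩, hnp⟩ := mem_factoredUpTo.mp hn
  rcases h1n.eq_or_lt with rfl | h1n
  · exact mem_insert_self _ _
  have hmin : n.minFac ∈ n.primeFactors :=
    Nat.mem_primeFactors.mpr ⟨Nat.minFac_prime (by omega), Nat.minFac_dvd n, by omega⟩
  have hsingle : n.primeFactors = {p} :=
    (subset_singleton_iff.mp hnp).resolve_left (ne_empty_of_mem hmin)
  refine mem_insert_of_mem (mem_filter.mpr ⟨mem_filter.mpr ⟨mem_range.mpr (by omega), ?_⟩, ?_⟩)
  · rw [isPrimePow_iff_card_primeFactors_eq_one, hsingle, card_singleton]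
  · rwa [hsingle, mem_singleton] at hmin

lemma ordProj_mem_factoredUpTo_singleton {N n p : ℕ} {P : Finset ℕ} (hp : p.Prime)
    (hn : n ∈ factoredUpTo N P) : ordProj[p] n ∈ factoredUpTo N {p} := by
  obtain ⟨⟨h1n, hnN⟩, -⟩ := mem_factoredUpTo.mp hn
  refine mem_factoredUpTo.mpr ⟨⟨Nat.ordProj_pos n p, (Nat.ordProj_le p (by omega)).trans hnN⟩, ?_⟩
  intro q hq
  rw [mem_singleton]
  exact (Nat.prime_dvd_prime_iff_eq (Nat.prime_of_mem_primeFactors hq) hp).mp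
    ((Nat.prime_of_mem_primeFactors hq).dvd_of_dvd_pow (Nat.dvd_of_mem_primeFactors hq))

lemma ordCompl_mem_factoredUpTo {N n p : ℕ} {P : Finset ℕ} (hp : p.Prime)
    (hn : n ∈ factoredUpTo N (insert p P)) : ordCompl[p] n ∈ factoredUpTo N P := by
  obtain ⟨⟨h1n, hnN⟩, hnP⟩ := mem_factoredUpTo.mp hn
  have hn0 : n ≠ 0 := by omega
  refine mem_factoredUpTo.mpr ⟨⟨Nat.ordCompl_pos p hn0, (Nat.ordCompl_le n p).trans hnN⟩, ?_⟩
  intro q hq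
  have hqp : q ≠ p := by
    rintro rfl
    exact Nat.not_dvd_ordCompl hp hn0 (Nat.dvd_of_mem_primeFactors hq)
  exact (mem_insert.mp (hnP (Nat.primeFactors_mono (Nat.ordCompl_dvd n p) hn0 hq))).resolve_left hqp

lemma sum_factoredUpTo_insert_le {f : ℕ → ℝ} (hf0 : ∀ n, 0 ≤ f n)
    (hmul : ∀ m n : ℕ, m.Coprime n → f (m * n) = f m * f n) {p : ℕ} (hp : p.Prime)
    (N : ℕ) (P : Finset ℕ) :
    ∑ n ∈ factoredUpTo N (insert p P), f n ≤
      (∑ q ∈ factoredUpTo N {p}, f q) * ∑ m ∈ factoredUpTo N P, f m := by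
  set e : ℕ → ℕ × ℕ := fun n => (ordProj[p] n, ordCompl[p] n)
  have he : ∀ n, (e n).1 * (e n).2 = n := fun n => Nat.ordProj_mul_ordCompl_eq_self n p
  have hfe : ∀ n ∈ factoredUpTo N (insert p P), f n = f (e n).1 * f (e n).2 := by
    intro n hn
    have hn0 : n ≠ 0 := by have := (mem_factoredUpTo.mp hn).1.1; omega
    rw [← hmul _ _ ((Nat.coprime_ordCompl hp hn0).pow_left _), he]
  calc ∑ n ∈ factoredUpTo N (insert p P), f n
      = ∑ y ∈ (factoredUpTo N (insert p P)).image e, f y.1 * f y.2 := by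
        rw [sum_image fun n _ m _ h => by rw [← he n, ← he m, h]]
        exact sum_congr rfl hfe
    _ ≤ ∑ y ∈ factoredUpTo N {p} ×ˢ factoredUpTo N P, f y.1 * f y.2 := by
        refine sum_le_sum_of_subset_of_nonneg ?_ fun y _ _ => mul_nonneg (hf0 _) (hf0 _)
        exact image_subset_iff.mpr fun n hn => mem_product.mpr
          ⟨ordProj_mem_factoredUpTo_singleton hp hn, ordCompl_mem_factoredUpTo hp hn⟩
    _ = _ := by rw [sum_product, sum_mul_sum]

lemma sum_factoredUpTo_le_prod {f : ℕ → ℝ} (hf0 : ∀ n, 0 ≤ f n) (hf1 : f 1 = 1)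
    (hmul : ∀ m n : ℕ, m.Coprime n → f (m * n) = f m * f n) (N : ℕ) {P : Finset ℕ}
    (hP : ∀ p ∈ P, p.Prime) :
    ∑ n ∈ factoredUpTo N P, f n ≤ ∏ p ∈ P, ∑ q ∈ factoredUpTo N {p}, f q := by
  induction P using Finset.induction_on with
  | empty =>
    simpa [hf1] using
      sum_le_sum_of_subset_of_nonneg (factoredUpTo_empty_subset N) fun n _ _ => hf0 n
  | insert p P hpP ih =>
    rw [prod_insert hpP]
    exact (sum_factoredUpTo_insert_le hf0 hmul (hP p (mem_insert_self p P)) N P).trans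
      (mul_le_mul_of_nonneg_left (ih fun q hq => hP q (mem_insert_of_mem hq))
        (sum_nonneg fun q _ => hf0 q))

lemma sum_factoredUpTo_singleton_le {f : ℕ → ℝ} (hf0 : ∀ n, 0 ≤ f n) (hf1 : f 1 = 1) (N p : ℕ) :
    ∑ q ∈ factoredUpTo N {p}, f q ≤ 1 + ∑ q ∈ primePowersLE N with q.minFac = p, f q := by
  have h1 : 1 ∉ {q ∈ primePowersLE N | q.minFac = p} := by
    simp [primePowersLE, not_isPrimePow_one]
  rw [← hf1, ← sum_insert h1]
  exact sum_le_sum_of_subset_of_nonneg (factoredUpTo_singleton_subset N p) fun n _ _ => hf0 n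

lemma minFac_mem_primesLE {N q : ℕ} (hq : q ∈ primePowersLE N) : q.minFac ∈ Nat.primesLE N := by
  obtain ⟨hqN, hq⟩ := mem_filter.mp hq
  exact Nat.mem_primesLE.mpr
    ⟨(Nat.minFac_le hq.pos).trans (Nat.lt_succ_iff.mp (mem_range.mp hqN)),
      Nat.minFac_prime hq.ne_one⟩

theorem sum_Icc_le_exp_sum_primePowersLE {f : ℕ → ℝ} (hf0 : ∀ n, 0 ≤ f n) (hf1 : f 1 = 1)
    (hmul : ∀ m n : ℕ, m.Coprime n → f (m * n) = f m * f n) (N : ℕ) :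
    ∑ n ∈ Icc 1 N, f n ≤ Real.exp (∑ q ∈ primePowersLE N, f q) := by
  have hfiber : ∀ p, 0 ≤ ∑ q ∈ primePowersLE N with q.minFac = p, f q :=
    fun p => sum_nonneg fun q _ => hf0 q
  calc ∑ n ∈ Icc 1 N, f n = ∑ n ∈ factoredUpTo N (Nat.primesLE N), f n := by
        rw [factoredUpTo_primesLE]
    _ ≤ ∏ p ∈ Nat.primesLE N, ∑ q ∈ factoredUpTo N {p}, f q :=
        sum_factoredUpTo_le_prod hf0 hf1 hmul N fun p hp => (Nat.mem_primesLE.mp hp).2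
    _ ≤ ∏ p ∈ Nat.primesLE N, (1 + ∑ q ∈ primePowersLE N with q.minFac = p, f q) :=
        prod_le_prod (fun p _ => sum_nonneg fun q _ => hf0 q)
          fun p _ => sum_factoredUpTo_singleton_le hf0 hf1 N p
    _ ≤ Real.exp (∑ p ∈ Nat.primesLE N, ∑ q ∈ primePowersLE N with q.minFac = p, f q) :=
        Real.prod_one_add_le_exp_sum _ hfiber
    _ = Real.exp (∑ q ∈ primePowersLE N, f q) := by
        rw [sum_fiberwise_of_maps_to fun q hq => minFac_mem_primesLE hq]

theorem sum_div_le_exp_primePowers_general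
    (g : ℕ → ℝ) (hg0 : ∀ n, 0 ≤ g n) (hg1 : g 1 = 1)
    (hmult : ∀ m n : ℕ, Nat.Coprime m n → g (m * n) = g m * g n)
    (x : ℝ) :
    ∑ n ∈ Finset.Icc 1 ⌊x⌋₊, g n / n ≤
      Real.exp (∑ q ∈ (Finset.range (⌊x⌋₊ + 1)).filter IsPrimePow, g q / q) := by
  refine sum_Icc_le_exp_sum_primePowersLE (f := fun n => g n / n)
    (fun n => div_nonneg (hg0 n) n.cast_nonneg) (by simp [hg1]) (fun m n hmn => ?_) ⌊x⌋₊
  rw [hmult m n hmn, Nat.cast_mul, mul_div_mul_comm]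

theorem sum_div_le_exp_primePowers
    (g : ℕ → ℝ) (hg0 : ∀ n, 0 ≤ g n) (hg1 : g 1 = 1)
    (hmult : ∀ m n : ℕ, Nat.Coprime m n → g (m * n) = g m * g n)
    (x : ℝ) (hx : 1 ≤ x) :
    ∑ n ∈ Finset.Icc 1 ⌊x⌋₊, g n / n ≤
      Real.exp (∑ q ∈ (Finset.range (⌊x⌋₊ + 1)).filter IsPrimePow, g q / q) :=
  sum_div_le_exp_primePowers_general g hg0 hg1 hmult x
end

section
/- For every non-negative multiplicative function g and every real x ≥ 2, Σ_{2 ≤ n ≤ x} g(n) ≤ (x/log x + 10x/(log x)^2) · Δ̃ · Σ_{n ≤ x} g(n)/n, where Δ̃ = sup_{1 ≤ y ≤ x} y^{-1} Σ_{q ≤ y} g(q) log q, with q running over prime powers. -/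
/-!
Since `log n = ∑_{p^a ∥ n} log p^a` and `g(n) = g(n / p^a) g(p^a)` for `p^a ∥ n`, the map
`(n, p^a) ↦ (n / p^a, p^a)` gives
`∑_{2 ≤ n ≤ y} g(n) log n ≤ ∑_{m ≤ y} g(m) ∑_{q ≤ y/m} g(q) log q ≤ Δ̃ y ∑_{m ≤ x} g(m) / m =: D y`.
Partial summation, through `log x - log n ≤ ∑_{n ≤ j ≤ x} 1/j`, turns this into a bound for
`G(y) = ∑_{2 ≤ n ≤ y} g(n)`: `G(x) log x ≤ D x + ∑_{2 ≤ j ≤ x} G(j) / j`. The trivial bound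
`G(j) ≤ D j / log 2` gives `G(j) ≤ (1 + 1 / log 2) D j / log j`; fed back in, together with
`∑_{2 ≤ j ≤ x} 1 / log j ≤ √x / log 2 + 2x / log x`, it gives `G(x) log x ≤ D (x + 10x / log x)`.
-/

open Finset Real

lemma log_sub_log_le_sub_div {a b : ℝ} (ha : 0 < a) (hb : 0 < b) :
    log b - log a ≤ (b - a) / a := by
  have h := log_le_sub_one_of_pos (div_pos hb ha)
  rwa [log_div hb.ne' ha.ne', div_sub_one ha.ne'] at h

lemma log_sub_log_le_sum_Ico_inv {n M : ℕ} (hn : 1 ≤ n) (hnM : n ≤ M) :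
    log M - log n ≤ ∑ j ∈ Ico n M, (j : ℝ)⁻¹ := by
  induction M, hnM using Nat.le_induction with
  | base => simp
  | succ M hnM ih =>
    have hM : (0 : ℝ) < M := by exact_mod_cast hn.trans hnM
    have hstep := log_sub_log_le_sub_div hM (by positivity : (0 : ℝ) < M + 1)
    rw [sum_Ico_succ_top hnM]
    push_cast
    rw [add_sub_cancel_left, one_div] at hstep
    linarith

lemma log_sub_log_le_sum_Icc_inv {n : ℕ} {x : ℝ} (hn : 1 ≤ n) (hnx : (n : ℝ) ≤ x) :
    log x - log n ≤ ∑ j ∈ Icc n ⌊x⌋₊, (j : ℝ)⁻¹ := by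
  have hx : x < ((⌊x⌋₊ + 1 : ℕ) : ℝ) := by exact_mod_cast Nat.lt_floor_add_one x
  have hnN : n ≤ ⌊x⌋₊ + 1 := (Nat.le_floor hnx).trans (Nat.le_succ _)
  rw [← Ico_add_one_right_eq_Icc]
  calc log x - log n ≤ log ((⌊x⌋₊ + 1 : ℕ) : ℝ) - log n := by
        gcongr
        exact lt_of_lt_of_le (by exact_mod_cast hn) hnx
    _ ≤ _ := log_sub_log_le_sum_Ico_inv hn hnN

lemma log_le_div_exp_one {t : ℝ} (ht : 0 < t) : log t ≤ t / exp 1 := by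
  have h := log_le_sub_one_of_pos (div_pos ht (exp_pos 1))
  rw [log_div ht.ne' (exp_pos 1).ne', log_exp] at h
  linarith

lemma sqrt_mul_log_le {x : ℝ} (hx : 0 < x) : √x * log x ≤ 2 * x / exp 1 := by
  have hs := sqrt_pos.2 hx
  calc √x * log x = 2 * (√x * log √x) := by rw [log_sqrt hx.le]; ring
    _ ≤ 2 * (√x * (√x / exp 1)) := by gcongr; exact log_le_div_exp_one hs
    _ = 2 * x / exp 1 := by rw [mul_div_assoc', mul_self_sqrt hx.le]; ring

lemma sum_inv_log_le_card_mul {s : Finset ℕ} {c : ℝ} (hc : 0 < c) (hs : ∀ j ∈ s, c ≤ log j) :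
    ∑ j ∈ s, (log j)⁻¹ ≤ s.card * c⁻¹ := by
  rw [← nsmul_eq_mul]
  exact sum_le_card_nsmul _ _ _ fun j hj => inv_anti₀ hc (hs j hj)

lemma sum_Icc_inv_log_le {x : ℝ} (hx : 2 ≤ x) :
    ∑ j ∈ Icc 2 ⌊x⌋₊, (log j)⁻¹ ≤ (2 / (exp 1 * log 2) + 2) * x / log x := by
  have hx0 : 0 < x := by linarith
  have hL : 0 < log x := log_pos (by linarith)
  set M := ⌊√x⌋₊
  rw [← sum_filter_add_sum_filter_not (Icc 2 ⌊x⌋₊) (· ≤ M)]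
  have hsmall : ∑ j ∈ (Icc 2 ⌊x⌋₊).filter (· ≤ M), (log j)⁻¹ ≤ √x * (log 2)⁻¹ := by
    refine (sum_inv_log_le_card_mul (log_pos one_lt_two) fun j hj => ?_).trans ?_
    · gcongr
      exact_mod_cast (mem_Icc.1 (mem_filter.1 hj).1).1
    · gcongr
      calc (((Icc 2 ⌊x⌋₊).filter (· ≤ M)).card : ℝ) ≤ (Icc 1 M).card := by
            gcongr
            intro j
            simp only [mem_filter, mem_Icc]
            omega
        _ ≤ √x := by rw [Nat.card_Icc, add_tsub_cancel_right]; exact Nat.floor_le (sqrt_nonneg x)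
  have hlarge : ∑ j ∈ (Icc 2 ⌊x⌋₊).filter (¬ · ≤ M), (log j)⁻¹ ≤ x * (log x / 2)⁻¹ := by
    refine (sum_inv_log_le_card_mul (c := log x / 2) (by positivity) fun j hj => ?_).trans ?_
    · have hj : √x < j := Nat.lt_of_floor_lt (not_le.1 (mem_filter.1 hj).2)
      rw [← log_sqrt hx0.le]
      exact log_le_log (sqrt_pos.2 hx0) hj.le
    · gcongr
      calc (((Icc 2 ⌊x⌋₊).filter (¬ · ≤ M)).card : ℝ) ≤ (Icc 1 ⌊x⌋₊).card := by
            gcongr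
            intro j
            simp only [mem_filter, mem_Icc]
            omega
        _ ≤ x := by rw [Nat.card_Icc, add_tsub_cancel_right]; exact Nat.floor_le hx0.le
  have hsqrt : √x ≤ 2 * x / (exp 1 * log x) := by
    rw [le_div_iff₀ (by positivity), ← mul_assoc, mul_comm √x, mul_assoc,
      ← le_div_iff₀' (exp_pos 1)]
    exact sqrt_mul_log_le hx0
  calc _ ≤ √x * (log 2)⁻¹ + x * (log x / 2)⁻¹ := add_le_add hsmall hlarge
    _ ≤ 2 * x / (exp 1 * log x) * (log 2)⁻¹ + x * (log x / 2)⁻¹ := by gcongr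
    _ = _ := by field_simp

lemma one_add_inv_log_two_mul_le_ten :
    (1 + (log 2)⁻¹) * (2 / (exp 1 * log 2) + 2) ≤ 10 := by
  have hl2 : 2 / 3 < log 2 := lt_trans (by norm_num) log_two_gt_d9
  have he : 2 < exp 1 := lt_trans (by norm_num) exp_one_gt_d9
  have hu : (log 2)⁻¹ ≤ 3 / 2 := by
    rw [inv_le_comm₀ (by linarith) (by norm_num)]; linarith
  have hv : 2 / (exp 1 * log 2) ≤ 3 / 2 := by
    rw [div_le_iff₀ (by positivity)]; nlinarith
  nlinarith [inv_nonneg.2 (by linarith : (0 : ℝ) ≤ log 2)]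

section PartialSummation

variable {a : ℕ → ℝ} {x D : ℝ}

lemma log_mul_sum_Icc_le_add_sum_div (ha : ∀ n, 0 ≤ a n) {B : ℕ → ℝ}
    (hB : ∀ j ∈ Icc 2 ⌊x⌋₊, ∑ n ∈ Icc 2 j, a n ≤ B j) :
    log x * ∑ n ∈ Icc 2 ⌊x⌋₊, a n ≤
      ∑ n ∈ Icc 2 ⌊x⌋₊, a n * log n + ∑ j ∈ Icc 2 ⌊x⌋₊, B j / j := by
  set N := ⌊x⌋₊
  calc log x * ∑ n ∈ Icc 2 N, a n = ∑ n ∈ Icc 2 N, (a n * log n + a n * (log x - log n)) := by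
        rw [mul_sum]
        exact sum_congr rfl fun n _ => by ring
    _ ≤ ∑ n ∈ Icc 2 N, (a n * log n + a n * ∑ j ∈ Icc n N, (j : ℝ)⁻¹) := by
        gcongr with n hn
        · exact ha n
        · have hn := mem_Icc.1 hn
          exact log_sub_log_le_sum_Icc_inv (by omega) ((Nat.le_floor_iff' (by omega)).1 hn.2)
    _ = ∑ n ∈ Icc 2 N, a n * log n + ∑ j ∈ Icc 2 N, (∑ n ∈ Icc 2 j, a n) / j := by
        rw [sum_add_distrib]
        congr 1
        simp only [mul_sum, sum_div]
        exact sum_comm' (by intro n j; simp only [mem_Icc]; omega)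
    _ ≤ _ := by gcongr with j hj; exact hB j hj

lemma sum_Icc_le_div_log_two (ha : ∀ n, 0 ≤ a n) {k : ℕ}
    (hA : ∑ n ∈ Icc 2 k, a n * log n ≤ D * k) :
    ∑ n ∈ Icc 2 k, a n ≤ D * k / log 2 := by
  rw [le_div_iff₀ (log_pos one_lt_two), sum_mul]
  refine le_trans (sum_le_sum fun n hn => ?_) hA
  gcongr
  · exact ha n
  · exact_mod_cast (mem_Icc.1 hn).1

lemma log_mul_sum_Icc_le_of_sum_mul_log_le (ha : ∀ n, 0 ≤ a n) (hD : 0 ≤ D)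
    (hA : ∀ k : ℕ, (k : ℝ) ≤ x → ∑ n ∈ Icc 2 k, a n * log n ≤ D * k) {k : ℕ} (hk : (k : ℝ) ≤ x) :
    log k * ∑ n ∈ Icc 2 k, a n ≤ (1 + (log 2)⁻¹) * D * k := by
  have hB : ∀ j ∈ Icc 2 ⌊(k : ℝ)⌋₊, ∑ n ∈ Icc 2 j, a n ≤ D * j / log 2 := by
    rw [Nat.floor_natCast]
    intro j hj
    exact sum_Icc_le_div_log_two ha (hA j (le_trans (by exact_mod_cast (mem_Icc.1 hj).2) hk))
  have h := log_mul_sum_Icc_le_add_sum_div ha hB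
  rw [Nat.floor_natCast] at h
  have hterm : ∀ j ∈ Icc 2 k, D * j / log 2 / j = D / log 2 := fun j hj => by
    have : (j : ℝ) ≠ 0 := by have := (mem_Icc.1 hj).1; positivity
    field_simp
  have hcard : ((Icc 2 k).card : ℝ) ≤ k := by
    rw [Nat.card_Icc]; exact_mod_cast (by omega : k + 1 - 2 ≤ k)
  rw [sum_congr rfl hterm, sum_const, nsmul_eq_mul] at h
  have hDl : 0 ≤ D / log 2 := div_nonneg hD (log_pos one_lt_two).le
  have hsplit : (1 + (log 2)⁻¹) * D * k = D * k + k * (D / log 2) := by ring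
  linarith [hA k hk, mul_le_mul_of_nonneg_right hcard hDl]

theorem sum_Icc_le_of_sum_mul_log_le (ha : ∀ n, 0 ≤ a n) (hD : 0 ≤ D) (hx : 2 ≤ x)
    (hA : ∀ k : ℕ, (k : ℝ) ≤ x → ∑ n ∈ Icc 2 k, a n * log n ≤ D * k) :
    ∑ n ∈ Icc 2 ⌊x⌋₊, a n ≤ (x / log x + 10 * x / log x ^ 2) * D := by
  have hL : 0 < log x := log_pos (by linarith)
  set c := 1 + (log 2)⁻¹
  have hB : ∀ j ∈ Icc 2 ⌊x⌋₊, ∑ n ∈ Icc 2 j, a n ≤ c * D * j / log j := fun j hj => by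
    have hj := mem_Icc.1 hj
    rw [le_div_iff₀' (log_pos (by exact_mod_cast hj.1))]
    exact log_mul_sum_Icc_le_of_sum_mul_log_le ha hD hA ((Nat.le_floor_iff' (by omega)).1 hj.2)
  have hterm : ∀ j ∈ Icc 2 ⌊x⌋₊, c * D * j / log j / j = c * D * (log j)⁻¹ := fun j hj => by
    have : (j : ℝ) ≠ 0 := by have := (mem_Icc.1 hj).1; positivity
    field_simp
  have h := log_mul_sum_Icc_le_add_sum_div ha hB
  rw [sum_congr rfl hterm, ← mul_sum] at h
  have hN : (⌊x⌋₊ : ℝ) ≤ x := Nat.floor_le (by linarith)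
  have hlog : ∑ n ∈ Icc 2 ⌊x⌋₊, a n * log n ≤ D * x := (hA _ hN).trans (by gcongr)
  have hinv : c * D * ∑ j ∈ Icc 2 ⌊x⌋₊, (log j)⁻¹ ≤ D * (10 * x / log x) := by
    calc c * D * ∑ j ∈ Icc 2 ⌊x⌋₊, (log j)⁻¹
        ≤ c * D * ((2 / (exp 1 * log 2) + 2) * x / log x) := by
          gcongr
          exact sum_Icc_inv_log_le hx
      _ = D * (c * (2 / (exp 1 * log 2) + 2) * x / log x) := by ring
      _ ≤ D * (10 * x / log x) := by
          gcongr
          exact one_add_inv_log_two_mul_le_ten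
  calc ∑ n ∈ Icc 2 ⌊x⌋₊, a n ≤ (D * x + D * (10 * x / log x)) / log x := by
        rw [le_div_iff₀' hL]
        linarith
    _ = (x / log x + 10 * x / log x ^ 2) * D := by field_simp

end PartialSummation

noncomputable def primePowLogSum (g : ℕ → ℝ) (K : ℕ) : ℝ :=
  ∑ q ∈ (range (K + 1)).filter IsPrimePow, g q * log q

section Multiplicative

variable {g : ℕ → ℝ}

lemma primePowLogSum_nonneg (hg0 : ∀ n, 0 ≤ g n) (K : ℕ) :
    0 ≤ primePowLogSum g K :=
  sum_nonneg fun q _ => mul_nonneg (hg0 q) (log_natCast_nonneg q)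

lemma primePowLogSum_mono (hg0 : ∀ n, 0 ≤ g n) : Monotone (primePowLogSum g) :=
  fun _ _ hKL => sum_le_sum_of_subset_of_nonneg
    (filter_subset_filter _ (range_subset_range.2 (by omega)))
    fun q _ _ => mul_nonneg (hg0 q) (log_natCast_nonneg q)

lemma log_eq_sum_log_ordProj {n : ℕ} (hn : n ≠ 0) :
    log n = ∑ p ∈ n.primeFactors, log (ordProj[p] n : ℕ) := by
  conv_lhs => rw [Nat.prod_primeFactors_pow_factorization hn]
  rw [Nat.cast_prod, log_prod]
  intro p hp
  have := Nat.pos_of_mem_primeFactors hp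
  positivity

lemma mul_log_eq_sum_ordCompl_mul
    (hmult : ∀ m n : ℕ, Nat.Coprime m n → g (m * n) = g m * g n) {n : ℕ} (hn : n ≠ 0) :
    g n * log n = ∑ p ∈ n.primeFactors,
      g (ordCompl[p] n) * (g (ordProj[p] n) * log (ordProj[p] n : ℕ)) := by
  rw [log_eq_sum_log_ordProj hn, mul_sum]
  refine sum_congr rfl fun p hp => ?_
  have hco := (Nat.coprime_ordCompl (Nat.prime_of_mem_primeFactors hp) hn).pow_left
    (n.factorization p)
  rw [← mul_assoc, mul_comm (g (ordCompl[p] n)), ← hmult _ _ hco, Nat.ordProj_mul_ordCompl_eq_self]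

lemma eq_of_ordProj_eq_of_ordCompl_eq {n n' p p' : ℕ} (hp : p ∈ n.primeFactors)
    (hp' : p' ∈ n'.primeFactors) (hproj : ordProj[p] n = ordProj[p'] n')
    (hcompl : ordCompl[p] n = ordCompl[p'] n') : n = n' ∧ p = p' := by
  have hpp := Nat.prime_of_mem_primeFactors hp
  have hpp' := Nat.prime_of_mem_primeFactors hp'
  have hν : n.factorization p ≠ 0 := Finsupp.mem_support_iff.1 hp
  have hdvd : p ∣ ordProj[p'] n' := hproj ▸ dvd_pow_self p hν
  refine ⟨?_, (Nat.prime_dvd_prime_iff_eq hpp hpp').1 (hpp.dvd_of_dvd_pow hdvd)⟩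
  calc n = ordProj[p] n * ordCompl[p] n := (Nat.ordProj_mul_ordCompl_eq_self n p).symm
    _ = ordProj[p'] n' * ordCompl[p'] n' := congrArg₂ (· * ·) hproj hcompl
    _ = n' := Nat.ordProj_mul_ordCompl_eq_self n' p'

lemma sum_mul_log_le_sum_mul_primePowLogSum (hg0 : ∀ n, 0 ≤ g n)
    (hmult : ∀ m n : ℕ, Nat.Coprime m n → g (m * n) = g m * g n) (k : ℕ) :
    ∑ n ∈ Icc 2 k, g n * log n ≤ ∑ m ∈ Icc 1 k, g m * primePowLogSum g (k / m) := by
  set A := (Icc 2 k).sigma fun n => n.primeFactors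
  set T := (Icc 1 k).sigma fun m => (range (k / m + 1)).filter IsPrimePow
  set e : (Σ _ : ℕ, ℕ) → (Σ _ : ℕ, ℕ) := fun np => ⟨ordCompl[np.2] np.1, ordProj[np.2] np.1⟩
  set F : (Σ _ : ℕ, ℕ) → ℝ := fun mq => g mq.1 * (g mq.2 * log mq.2)
  have hinj : Set.InjOn e A := by
    rintro ⟨n, p⟩ hnp ⟨n', p'⟩ hnp' he
    simp only [A, coe_sigma, Set.mem_sigma_iff, mem_coe] at hnp hnp'
    simp only [e, Sigma.mk.injEq, heq_eq_eq] at he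
    obtain ⟨rfl, rfl⟩ := eq_of_ordProj_eq_of_ordCompl_eq hnp.2 hnp'.2 he.2 he.1
    rfl
  have hmaps : ∀ np ∈ A, e np ∈ T := by
    rintro ⟨n, p⟩ hnp
    simp only [A, mem_sigma, mem_Icc] at hnp
    have hp := Nat.prime_of_mem_primeFactors hnp.2
    have hm := Nat.ordCompl_pos p (by omega : n ≠ 0)
    have hν : n.factorization p ≠ 0 := Finsupp.mem_support_iff.1 hnp.2
    simp only [e, T, mem_sigma, mem_Icc, mem_filter, mem_range, Nat.lt_succ_iff]
    refine ⟨⟨hm, (Nat.ordCompl_le n p).trans hnp.1.2⟩, ?_, hp.prime.isPrimePow.pow hν⟩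
    rw [Nat.le_div_iff_mul_le hm, Nat.ordProj_mul_ordCompl_eq_self]
    exact hnp.1.2
  calc ∑ n ∈ Icc 2 k, g n * log n = ∑ np ∈ A, F (e np) := by
        rw [sum_sigma]
        exact sum_congr rfl fun n hn =>
          mul_log_eq_sum_ordCompl_mul hmult (by have := (mem_Icc.1 hn).1; omega)
    _ = ∑ mq ∈ A.image e, F mq := (sum_image hinj).symm
    _ ≤ ∑ mq ∈ T, F mq := sum_le_sum_of_subset_of_nonneg (image_subset_iff.2 hmaps)
        fun mq _ _ => mul_nonneg (hg0 _) (mul_nonneg (hg0 _) (log_natCast_nonneg _))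
    _ = ∑ m ∈ Icc 1 k, g m * primePowLogSum g (k / m) := by
        simp only [T, F, sum_sigma, primePowLogSum, mul_sum]

lemma sum_mul_log_le_of_primePowLogSum_le (hg0 : ∀ n, 0 ≤ g n)
    (hmult : ∀ m n : ℕ, Nat.Coprime m n → g (m * n) = g m * g n) {x Δ : ℝ}
    (hΔ : ∀ y ∈ Set.Icc 1 x, primePowLogSum g ⌊y⌋₊ ≤ Δ * y) {k : ℕ} (hk : (k : ℝ) ≤ x) :
    ∑ n ∈ Icc 2 k, g n * log n ≤ Δ * (∑ m ∈ Icc 1 k, g m / m) * k := by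
  calc ∑ n ∈ Icc 2 k, g n * log n ≤ ∑ m ∈ Icc 1 k, g m * primePowLogSum g (k / m) :=
        sum_mul_log_le_sum_mul_primePowLogSum hg0 hmult k
    _ ≤ ∑ m ∈ Icc 1 k, g m * (Δ * (k / m)) := by
        gcongr with m hm
        · exact hg0 m
        · have hm := mem_Icc.1 hm
          have hm0 : (0 : ℝ) < m := by exact_mod_cast hm.1
          rw [← Nat.floor_div_eq_div (K := ℝ)]
          refine hΔ _ ⟨?_, (div_le_self k.cast_nonneg (by exact_mod_cast hm.1)).trans hk⟩
          rw [le_div_iff₀ hm0, one_mul]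
          exact_mod_cast hm.2
    _ = Δ * (∑ m ∈ Icc 1 k, g m / m) * k := by
        rw [mul_sum, sum_mul]
        exact sum_congr rfl fun m _ => by ring

lemma primePowLogSum_le_iSup_mul (hg0 : ∀ n, 0 ≤ g n) {x y : ℝ} (hy : y ∈ Set.Icc 1 x) :
    primePowLogSum g ⌊y⌋₊ ≤
      (⨆ z : Set.Icc (1 : ℝ) x, (z : ℝ)⁻¹ * primePowLogSum g ⌊(z : ℝ)⌋₊) * y := by
  have hbdd : BddAbove (Set.range fun z : Set.Icc (1 : ℝ) x =>
      (z : ℝ)⁻¹ * primePowLogSum g ⌊(z : ℝ)⌋₊) := by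
    refine ⟨primePowLogSum g ⌊x⌋₊, ?_⟩
    rintro _ ⟨⟨z, hz1, hzx⟩, rfl⟩
    calc (z⁻¹ * primePowLogSum g ⌊z⌋₊) ≤ 1 * primePowLogSum g ⌊z⌋₊ := by
          gcongr
          · exact primePowLogSum_nonneg hg0 _
          · exact inv_le_one_of_one_le₀ hz1
      _ ≤ primePowLogSum g ⌊x⌋₊ := by
          rw [one_mul]
          exact primePowLogSum_mono hg0 (Nat.floor_le_floor hzx)
  rw [mul_comm, ← inv_mul_le_iff₀ (by linarith [hy.1] : (0 : ℝ) < y)]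
  exact le_ciSup hbdd ⟨y, hy⟩

end Multiplicative

theorem sum_le_delta_sum_general
    (g : ℕ → ℝ) (hg0 : ∀ n, 0 ≤ g n)
    (hmult : ∀ m n : ℕ, Nat.Coprime m n → g (m * n) = g m * g n)
    (x : ℝ) (hx : 2 ≤ x) :
    ∑ n ∈ Finset.Icc 2 ⌊x⌋₊, g n ≤
      (x / Real.log x + 10 * x / (Real.log x) ^ 2) *
        (⨆ y : Set.Icc (1 : ℝ) x,
          (y : ℝ)⁻¹ * ∑ q ∈ (Finset.range (⌊(y : ℝ)⌋₊ + 1)).filter IsPrimePow,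
            g q * Real.log q) *
        ∑ n ∈ Finset.Icc 1 ⌊x⌋₊, g n / n := by
  change _ ≤ _ * (⨆ y : Set.Icc (1 : ℝ) x, (y : ℝ)⁻¹ * primePowLogSum g ⌊(y : ℝ)⌋₊) * _
  set Δ := ⨆ y : Set.Icc (1 : ℝ) x, (y : ℝ)⁻¹ * primePowLogSum g ⌊(y : ℝ)⌋₊
  set S := ∑ n ∈ Icc 1 ⌊x⌋₊, g n / n
  have hΔ : 0 ≤ Δ := Real.iSup_nonneg fun y =>
    mul_nonneg (inv_nonneg.2 (by linarith [y.2.1])) (primePowLogSum_nonneg hg0 _)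
  have hS : 0 ≤ S := sum_nonneg fun n _ => div_nonneg (hg0 n) n.cast_nonneg
  have hA : ∀ k : ℕ, (k : ℝ) ≤ x → ∑ n ∈ Icc 2 k, g n * log n ≤ Δ * S * k := fun k hk => by
    refine (sum_mul_log_le_of_primePowLogSum_le hg0 hmult
      (fun y hy => primePowLogSum_le_iSup_mul hg0 hy) hk).trans ?_
    gcongr
    refine sum_le_sum_of_subset_of_nonneg (Icc_subset_Icc_right (Nat.le_floor hk)) ?_
    exact fun n _ _ => div_nonneg (hg0 n) n.cast_nonneg
  rw [mul_assoc]
  exact sum_Icc_le_of_sum_mul_log_le hg0 (mul_nonneg hΔ hS) hx hA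

theorem sum_le_delta_sum
    (g : ℕ → ℝ) (hg0 : ∀ n, 0 ≤ g n) (hg1 : g 1 = 1)
    (hmult : ∀ m n : ℕ, Nat.Coprime m n → g (m * n) = g m * g n)
    (x : ℝ) (hx : 2 ≤ x) :
    ∑ n ∈ Finset.Icc 2 ⌊x⌋₊, g n ≤
      (x / Real.log x + 10 * x / (Real.log x) ^ 2) *
        (⨆ y : Set.Icc (1 : ℝ) x,
          (y : ℝ)⁻¹ * ∑ q ∈ (Finset.range (⌊(y : ℝ)⌋₊ + 1)).filter IsPrimePow,
            g q * Real.log q) *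
        ∑ n ∈ Finset.Icc 1 ⌊x⌋₊, g n / n :=
  sum_le_delta_sum_general g hg0 hmult x hx
end

section
/- There exists a constant C > 0 such that for every ε ∈ (0,1) and every real x ≥ 2, the sum over primes p > x^ε of p^{-1}·exp(−log p / log x) is at most C/ε. -/
/-!
For `p > x ^ ε` the factor `log p / (ε log x)` exceeds `1`, so with `δ = 1 / log x` the sum is at
most `(ε log x)⁻¹ ∑ₚ log p · p ^ (-(1 + δ))`. Partial summation against Chebyshev's bound
`θ n ≤ n log 4` bounds this prime sum by `log 4 ∑ₙ n ^ (-(1 + δ))`, and comparison with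
`∫₁^∞ t ^ (-(1 + δ)) dt = 1 / δ` gives `log 4 (1 + log x)`, which is `O(log x)` since `x ≥ 2`.
-/

open Finset Real

theorem sum_range_mul_le_of_sum_range_le {R : Type*} [Ring R] [PartialOrder R] [IsOrderedRing R]
    {a b w : ℕ → R}
    (hab : ∀ n, ∑ i ∈ range n, a i ≤ ∑ i ∈ range n, b i) (hw : Antitone w) (hw0 : 0 ≤ w)
    (n : ℕ) : ∑ i ∈ range n, a i * w i ≤ ∑ i ∈ range n, b i * w i := by
  set d := fun i ↦ a i - b i
  have hd (n : ℕ) : ∑ i ∈ range n, d i ≤ 0 := by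
    simpa only [d, sum_sub_distrib, sub_nonpos] using hab n
  have abel (n : ℕ) : ∑ i ∈ range n, d i * w i ≤ (∑ i ∈ range n, d i) * w n := by
    induction n with
    | zero => simp
    | succ n ih =>
      calc ∑ i ∈ range (n + 1), d i * w i ≤ (∑ i ∈ range (n + 1), d i) * w n := by
            rw [sum_range_succ, sum_range_succ, add_mul]; gcongr
        _ ≤ (∑ i ∈ range (n + 1), d i) * w (n + 1) :=
            mul_le_mul_of_nonpos_left (hw n.le_succ) (hd _)
  have := (abel n).trans (mul_nonpos_of_nonpos_of_nonneg (hd n) (hw0 n))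
  simpa only [d, sub_mul, sum_sub_distrib, sub_nonpos] using this

theorem sum_range_add_one_rpow_neg_le {δ : ℝ} (hδ : 0 < δ) (n : ℕ) :
    ∑ i ∈ range n, ((i : ℝ) + 1) ^ (-(1 + δ)) ≤ 1 + 1 / δ := by
  cases n with
  | zero => simp only [range_zero, sum_empty]; positivity
  | succ n =>
    have anti : AntitoneOn (fun t : ℝ ↦ t ^ (-(1 + δ))) (Set.Icc 1 (1 + n)) :=
      fun s hs t _ hst ↦ rpow_le_rpow_of_nonpos (by linarith [hs.1]) hst (by linarith)
    have integral : ∫ t in (1 : ℝ)..1 + n, t ^ (-(1 + δ)) ≤ 1 / δ := by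
      rw [integral_rpow (Or.inr ⟨by linarith, by simp⟩), one_rpow, show -(1 + δ) + 1 = -δ by ring, div_neg, ← neg_div, neg_sub]
      gcongr
      linarith [rpow_pos_of_pos (by positivity : (0 : ℝ) < 1 + n) (-δ)]
    have sum_le := anti.sum_le_integral
    rw [sum_range_succ']
    push_cast at sum_le ⊢
    simp only [add_comm _ (1 : ℝ)] at sum_le ⊢
    rw [add_zero, one_rpow]
    linarith

theorem Nat.sum_primesLE_eq_sum_range {M : Type*} [AddCommMonoid M] (f : ℕ → M) (n : ℕ) :
    ∑ p ∈ primesLE n, f p = ∑ i ∈ range n, if (i + 1).Prime then f (i + 1) else 0 := by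
  rw [primesLE_eq_filter_range, sum_filter, sum_range_succ']
  simp [Nat.not_prime_zero]

theorem sum_primesLE_log_mul_rpow_neg_le {δ : ℝ} (hδ : 0 < δ) (n : ℕ) :
    ∑ p ∈ Nat.primesLE n, log p * (p : ℝ) ^ (-(1 + δ)) ≤ log 4 * (1 + 1 / δ) := by
  set a : ℕ → ℝ := fun i ↦ if (i + 1).Prime then log (i + 1 : ℕ) else 0
  set w : ℕ → ℝ := fun i ↦ ((i : ℝ) + 1) ^ (-(1 + δ))
  have chebyshev (m : ℕ) : ∑ i ∈ range m, a i ≤ ∑ i ∈ range m, log 4 := by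
    rw [← Nat.sum_primesLE_eq_sum_range (fun p ↦ log p), ← Chebyshev.theta_eq_sum_primesLE_log,
      sum_const, card_range, nsmul_eq_mul, mul_comm]
    exact Chebyshev.theta_le_log4_mul_x m.cast_nonneg
  have hw : Antitone w := fun i j hij ↦
    rpow_le_rpow_of_nonpos (by positivity) (by gcongr) (by linarith)
  calc ∑ p ∈ Nat.primesLE n, log p * (p : ℝ) ^ (-(1 + δ)) = ∑ i ∈ range n, a i * w i := by
        rw [Nat.sum_primesLE_eq_sum_range]
        refine sum_congr rfl fun i _ ↦ ?_
        simp only [a, w, ite_mul, zero_mul]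
        push_cast
        rfl
    _ ≤ ∑ i ∈ range n, log 4 * w i :=
        sum_range_mul_le_of_sum_range_le chebyshev hw (fun i ↦ by positivity) n
    _ ≤ log 4 * (1 + 1 / δ) := by
        rw [← mul_sum]
        gcongr
        exact sum_range_add_one_rpow_neg_le hδ n

theorem sum_primes_log_mul_rpow_neg_le {δ : ℝ} (hδ : 0 < δ) (s : Finset Nat.Primes) :
    ∑ p ∈ s, log (p : ℕ) * ((p : ℕ) : ℝ) ^ (-(1 + δ)) ≤ log 4 * (1 + 1 / δ) := by
  have subset : s.image ((↑) : Nat.Primes → ℕ) ⊆ Nat.primesLE (s.sup (↑)) := fun n hn ↦ by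
    obtain ⟨p, hp, rfl⟩ := mem_image.mp hn
    exact Nat.mem_primesLE.mpr ⟨le_sup (f := ((↑) : Nat.Primes → ℕ)) hp, p.2⟩
  calc ∑ p ∈ s, log (p : ℕ) * ((p : ℕ) : ℝ) ^ (-(1 + δ))
      = ∑ n ∈ s.image ((↑) : Nat.Primes → ℕ), log n * (n : ℝ) ^ (-(1 + δ)) :=
        (sum_image (f := fun n : ℕ ↦ log n * (n : ℝ) ^ (-(1 + δ)))
          fun _ _ _ _ h ↦ Nat.Primes.coe_nat_injective h).symm
    _ ≤ ∑ n ∈ Nat.primesLE (s.sup (↑)), log n * (n : ℝ) ^ (-(1 + δ)) :=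
        sum_le_sum_of_subset_of_nonneg subset fun n _ _ ↦
          mul_nonneg (log_natCast_nonneg n) (by positivity)
    _ ≤ log 4 * (1 + 1 / δ) := sum_primesLE_log_mul_rpow_neg_le hδ _

theorem exp_neg_log_div_div_eq_rpow {t : ℝ} (ht : 0 < t) (L : ℝ) :
    exp (-log t / L) / t = t ^ (-(1 + 1 / L)) := by
  rw [rpow_def_of_pos ht, div_eq_mul_inv, ← exp_log (inv_pos.2 ht), log_inv, ← exp_add]
  ring_nf

theorem ite_le_log_mul_div {x ε t y : ℝ} (hx : 1 < x) (hε : 0 < ε) (ht : 1 ≤ t) (hy : 0 ≤ y) :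
    (if x ^ ε < t then y else 0) ≤ log t * y / (ε * log x) := by
  have hεx : 0 < ε * log x := mul_pos hε (log_pos hx)
  split_ifs with hxt
  · have : ε * log x < log t := by
      rw [← log_rpow (by linarith)]
      exact log_lt_log (by positivity) hxt
    rw [le_div_iff₀ hεx, mul_comm (log t)]
    gcongr
  · exact div_nonneg (mul_nonneg (log_nonneg ht) hy) hεx.le

theorem log_four_mul_one_add_le {L : ℝ} (hL : log 2 ≤ L) : log 4 * (1 + L) ≤ 4 * L := by
  nlinarith [log_four_eq, log_two_lt_d9, log_pos one_lt_two]

theorem tsum_primes_exp_bound :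
    ∃ C : ℝ, 0 < C ∧ ∀ ε : ℝ, 0 < ε → ε < 1 → ∀ x : ℝ, 2 ≤ x →
      (∑' p : Nat.Primes,
          (if x ^ ε < (p : ℕ) then
            Real.exp (-Real.log (p : ℕ) / Real.log x) / (p : ℕ) else 0)) ≤ C / ε := by
  refine ⟨4, by norm_num, fun ε hε _ x hx ↦ ?_⟩
  have hx1 : 1 < x := by linarith
  have hεL : 0 < ε * log x := mul_pos hε (log_pos hx1)
  refine tsum_le_of_sum_le' (by positivity) fun s ↦ ?_
  calc ∑ p ∈ s, (if x ^ ε < (p : ℕ) then exp (-log (p : ℕ) / log x) / (p : ℕ) else 0)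
      ≤ ∑ p ∈ s, log (p : ℕ) * ((p : ℕ) : ℝ) ^ (-(1 + 1 / log x)) / (ε * log x) := by
        gcongr with p
        have hp : (1 : ℝ) ≤ (p : ℕ) := mod_cast p.2.one_lt.le
        rw [exp_neg_log_div_div_eq_rpow (by linarith)]
        exact ite_le_log_mul_div hx1 hε hp (by positivity)
    _ = (∑ p ∈ s, log (p : ℕ) * ((p : ℕ) : ℝ) ^ (-(1 + 1 / log x))) / (ε * log x) :=
        (sum_div _ _ _).symm
    _ ≤ log 4 * (1 + log x) / (ε * log x) := by
        gcongr
        simpa only [one_div_one_div] using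
          sum_primes_log_mul_rpow_neg_le (one_div_pos.2 (log_pos hx1)) s
    _ ≤ 4 * log x / (ε * log x) :=
        div_le_div_of_nonneg_right (log_four_mul_one_add_le (log_le_log (by norm_num) hx)) hεL.le
    _ = 4 / ε := mul_div_mul_right _ _ (log_pos hx1).ne'
end

section
/- Suppose g is a non-negative function on primes with g(p) ≤ β, h is a complex-valued function on primes with |h(p)| ≤ g(p), and the series Σ_p p^{-1}(g(p) − Re h(p)) converges. Then for every fixed β' ≥ 1, Σ_{x < p ≤ x^{β'}} p^{-1} Im(h(p)) → 0 as x → ∞. -/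
/-!
From `‖h p‖ ≤ g p ≤ β` one gets `(Im h p)^2 ≤ |g p - h p|^2 ≤ 2 β (g p - Re h p)`, so by
Cauchy–Schwarz the square of the sum over `x < p ≤ x^β'` is at most `2β` times a tail of the
convergent series `∑ (g p - Re h p) / p`, which tends to `0`, times `∑_{x < p ≤ x^β'} 1 / p`.
The latter stays bounded: Chebyshev's bound `θ(2m) ≤ 2m log 4` gives
`∑_{m ≤ p < 2m} 1 / p ≤ 2 log 4 / log m`, and summing over dyadic blocks gives `O(β')`, the weak
form of Mertens' theorem that suffices here.
-/

open Filter Finset Real Topology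

theorem Complex.im_sq_le_two_mul_mul_sub_re {z : ℂ} {r : ℝ} (hz : ‖z‖ ≤ r) :
    z.im ^ 2 ≤ 2 * r * (r - z.re) := by
  have hnorm : z.re ^ 2 + z.im ^ 2 ≤ r ^ 2 := by
    rw [← Complex.normSq_add_mul_I z.re z.im, Complex.re_add_im, Complex.normSq_eq_norm_sq]
    exact pow_le_pow_left₀ (norm_nonneg z) hz 2
  nlinarith

theorem sq_sum_im_div_le {ι : Type*} (s : Finset ι) {w g : ι → ℝ} {h : ι → ℂ} {β : ℝ}
    (hw : ∀ i ∈ s, 0 ≤ w i) (hhg : ∀ i ∈ s, ‖h i‖ ≤ g i) (hgβ : ∀ i ∈ s, g i ≤ β) :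
    (∑ i ∈ s, (h i).im / w i) ^ 2 ≤
      2 * β * (∑ i ∈ s, (g i - (h i).re) / w i) * ∑ i ∈ s, 1 / w i := by
  have him : ∀ i ∈ s, (h i).im ^ 2 ≤ 2 * β * (g i - (h i).re) := fun i hi =>
    (Complex.im_sq_le_two_mul_mul_sub_re (hhg i hi)).trans <|
      mul_le_mul_of_nonneg_right (by linarith [hgβ i hi])
        (sub_nonneg.mpr ((Complex.re_le_norm _).trans (hhg i hi)))
  rw [mul_sum s _ (2 * β)]
  refine sum_sq_le_sum_mul_sum_of_sq_le_mul s (fun i hi => ?_) (fun i hi => ?_) (fun i hi => ?_)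
  · rw [← mul_div_assoc]
    exact div_nonneg ((sq_nonneg _).trans (him i hi)) (hw i hi)
  · exact one_div_nonneg.mpr (hw i hi)
  · calc ((h i).im / w i) ^ 2 = (h i).im ^ 2 / w i ^ 2 := div_pow _ _ _
      _ ≤ 2 * β * (g i - (h i).re) / w i ^ 2 := div_le_div_of_nonneg_right (him i hi) (sq_nonneg _)
      _ = 2 * β * ((g i - (h i).re) / w i) * (1 / w i) := by ring

theorem sum_inv_prime_Ico_mul_log_le {m : ℕ} (hm : 1 ≤ m) :
    (∑ p ∈ Ico m (2 * m) with p.Prime, (1 : ℝ) / p) * log m ≤ 2 * log 4 := by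
  have hlog_sum : ∑ p ∈ Ico m (2 * m) with p.Prime, log p ≤ Chebyshev.theta (2 * m : ℕ) := by
    rw [Chebyshev.theta, Nat.floor_natCast]
    refine sum_le_sum_of_subset_of_nonneg (fun p hp => ?_) fun p _ _ => log_natCast_nonneg p
    simp only [mem_filter, mem_Ico, mem_Ioc] at hp ⊢
    exact ⟨⟨by omega, by omega⟩, hp.2⟩
  calc (∑ p ∈ Ico m (2 * m) with p.Prime, (1 : ℝ) / p) * log m
      = ∑ p ∈ Ico m (2 * m) with p.Prime, 1 / (p : ℝ) * log m := sum_mul _ _ _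
    _ ≤ ∑ p ∈ Ico m (2 * m) with p.Prime, 1 / (m : ℝ) * log p := by
        refine sum_le_sum fun p hp => ?_
        have hmp : (m : ℝ) ≤ p := by exact_mod_cast (mem_Ico.mp (mem_filter.mp hp).1).1
        gcongr
    _ ≤ 1 / m * Chebyshev.theta (2 * m : ℕ) := by rw [← mul_sum]; gcongr
    _ ≤ 1 / m * (log 4 * (2 * m : ℕ)) := by
        gcongr; exact Chebyshev.theta_le_log4_mul_x (by positivity)
    _ = 2 * log 4 := by push_cast; field_simp

theorem sum_inv_prime_Ico_two_pow_le {a : ℕ} (ha : 1 ≤ a) (n : ℕ) :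
    ∑ p ∈ Ico (2 ^ a : ℕ) (2 ^ (a + n)) with p.Prime, (1 : ℝ) / p ≤ 4 * n / a := by
  induction n with
  | zero => simp
  | succ n ih =>
    have hblock :
        ∑ p ∈ Ico (2 ^ (a + n) : ℕ) (2 * 2 ^ (a + n)) with p.Prime, (1 : ℝ) / p ≤ 4 / a := by
      have hlog : log ((2 ^ (a + n) : ℕ) : ℝ) = (a + n) * log 2 := by
        push_cast; rw [log_pow]; push_cast; ring
      have hlog4 : log 4 = 2 * log 2 := by
        rw [show (4 : ℝ) = 2 ^ 2 by norm_num, log_pow]; push_cast; ring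
      have := sum_inv_prime_Ico_mul_log_le (Nat.one_le_two_pow (n := a + n))
      rw [hlog, hlog4] at this
      calc _ ≤ 2 * (2 * log 2) / ((a + n) * log 2) := (le_div_iff₀ (by positivity)).2 this
        _ = 4 / (a + n) := by field_simp; ring
        _ ≤ 4 / a := by gcongr; simp
    rw [← add_assoc, pow_succ', sum_filter, ← sum_Ico_consecutive _
      (Nat.pow_le_pow_right two_pos (Nat.le_add_right a n)) (by omega), ← sum_filter, ← sum_filter]
    calc _ ≤ 4 * n / (a : ℝ) + 4 / a := add_le_add ih hblock
      _ = 4 * ((n + 1 : ℕ) : ℝ) / a := by push_cast; ring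

noncomputable def primesIoc (x y : ℝ) : Finset ℕ :=
  {p ∈ range (⌊y⌋₊ + 1) | p.Prime ∧ x < p ∧ (p : ℝ) ≤ y}

@[simp]
theorem mem_primesIoc {x y : ℝ} {p : ℕ} : p ∈ primesIoc x y ↔ p.Prime ∧ x < p ∧ (p : ℝ) ≤ y := by
  simp only [primesIoc, mem_filter, mem_range, and_iff_right_iff_imp]
  exact fun ⟨_, _, hpy⟩ => Nat.lt_succ_of_le (Nat.le_floor hpy)

theorem sum_inv_primesIoc_le {x y : ℝ} (hx : 2 ≤ x) (hy : 1 ≤ y) :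
    ∑ p ∈ primesIoc x y, (1 : ℝ) / p ≤ 8 * log y / log x + 4 := by
  set a := Nat.log 2 ⌊x⌋₊
  set b := Nat.log 2 ⌊y⌋₊
  -- the dyadic blocks `[2^k, 2^(k+1))` with `a ≤ k ≤ b` cover `(x, y]`
  have ha : 1 ≤ a := Nat.log_pos one_lt_two (Nat.le_floor (by exact_mod_cast hx))
  have hx0 : 0 < ⌊x⌋₊ := Nat.floor_pos.mpr (by linarith)
  have h2a : 2 ^ a ≤ ⌊x⌋₊ := Nat.pow_log_le_self 2 hx0.ne'
  have hsub : primesIoc x y ⊆ {p ∈ Ico (2 ^ a : ℕ) (2 ^ (a + (b + 1 - a))) | p.Prime} := by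
    intro p hp
    obtain ⟨hp, hxp, hpy⟩ := mem_primesIoc.mp hp
    have hxp' : ⌊x⌋₊ < p := (Nat.floor_lt (by linarith)).mpr hxp
    have hpy' : p < 2 ^ (b + 1) :=
      (Nat.le_floor hpy).trans_lt (Nat.lt_pow_succ_log_self one_lt_two _)
    have := Nat.pow_le_pow_right two_pos (show b + 1 ≤ a + (b + 1 - a) by omega)
    simp only [mem_filter, mem_Ico]
    exact ⟨⟨by omega, by omega⟩, hp⟩
  have hb : b * log 2 ≤ log y := by
    rw [← log_pow]
    gcongr
    calc (2 : ℝ) ^ b = ((2 ^ b : ℕ) : ℝ) := by push_cast; rfl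
      _ ≤ ⌊y⌋₊ := by exact_mod_cast Nat.pow_log_le_self 2 (Nat.floor_pos.mpr hy).ne'
      _ ≤ y := Nat.floor_le (by linarith)
  have hax : log x < (a + 1) * log 2 := by
    rw [← Nat.cast_succ, ← log_pow]
    gcongr
    calc x < ⌊x⌋₊ + 1 := Nat.lt_floor_add_one x
      _ ≤ ((2 ^ (a + 1) : ℕ) : ℝ) := by exact_mod_cast Nat.lt_pow_succ_log_self one_lt_two _
      _ = 2 ^ (a + 1) := by push_cast; rfl
  have ha0 : (1 : ℝ) ≤ a := by exact_mod_cast ha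
  have hlog2 : 0 < log 2 := log_pos one_lt_two
  calc ∑ p ∈ primesIoc x y, (1 : ℝ) / p
      ≤ ∑ p ∈ Ico (2 ^ a : ℕ) (2 ^ (a + (b + 1 - a))) with p.Prime, (1 : ℝ) / p :=
        sum_le_sum_of_subset_of_nonneg hsub fun _ _ _ => by positivity
    _ ≤ 4 * ((b + 1 - a : ℕ) : ℝ) / a := sum_inv_prime_Ico_two_pow_le ha _
    _ ≤ 4 * (b + 1) / a := by gcongr; norm_cast; omega
    _ ≤ 8 * (b * log 2) / ((a + 1) * log 2) + 4 := by
        rw [← mul_assoc, mul_div_mul_right _ _ hlog2.ne', div_add' _ _ _ (by positivity),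
          div_le_div_iff₀ (by positivity) (by positivity)]
        nlinarith [(Nat.cast_nonneg b : (0 : ℝ) ≤ b)]
    _ ≤ 8 * log y / log x + 4 := by
        have : 0 < log x := log_pos (by linarith)
        gcongr
        linarith [log_nonneg hy]

theorem Summable.tendsto_sum_zero_of_forall_lt {G : Type*} [AddCommGroup G] [TopologicalSpace G]
    [IsTopologicalAddGroup G] {f : ℕ → G} (hf : Summable f) {S : ℝ → Finset ℕ}
    (hS : ∀ x, ∀ n ∈ S x, x < n) : Tendsto (fun x => ∑ n ∈ S x, f n) atTop (𝓝 0) := by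
  refine fun e he => mem_map.mpr ?_
  obtain ⟨s, hs⟩ := hf.vanishing he
  filter_upwards [eventually_ge_atTop ((s.sup id : ℕ) : ℝ)] with x hx
  refine hs (S x) (disjoint_left.mpr fun n hn hns => ?_)
  have : (n : ℝ) ≤ s.sup id := by exact_mod_cast le_sup (f := id) hns
  linarith [hS x n hn]

theorem tendsto_sum_primesIoc_zero {G : Type*} [AddCommGroup G] [TopologicalSpace G]
    [IsTopologicalAddGroup G] {f : ℕ → G} (hf : Summable fun p : Nat.Primes => f p)
    (y : ℝ → ℝ) : Tendsto (fun x => ∑ p ∈ primesIoc x (y x), f p) atTop (𝓝 0) := by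
  have hind : Summable ({p | p.Prime}.indicator f) := summable_subtype_iff_indicator.mp hf
  refine (hind.tendsto_sum_zero_of_forall_lt fun x p hp => (mem_primesIoc.mp hp).2.1).congr
    fun x => sum_congr rfl fun p hp => Set.indicator_of_mem (mem_primesIoc.mp hp).1 f

theorem sum_im_tendsto_zero_general
    (β : ℝ) (g : ℕ → ℝ) (h : ℕ → ℂ)
    (hgβ : ∀ p : ℕ, p.Prime → g p ≤ β)
    (hhg : ∀ p : ℕ, p.Prime → ‖h p‖ ≤ g p)
    (hconv : Summable (fun p : Nat.Primes => (g p - (h p).re) / (p : ℕ)))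
    (β' : ℝ) (hβ' : 1 ≤ β') :
    Filter.Tendsto
      (fun x : ℝ =>
        ∑ p ∈ (Finset.range (⌊x ^ β'⌋₊ + 1)).filter
            (fun p => Nat.Prime p ∧ x < p ∧ (p : ℝ) ≤ x ^ β'),
          (h p).im / p)
      Filter.atTop (nhds 0) := by
  show Tendsto (fun x => ∑ p ∈ primesIoc x (x ^ β'), (h p).im / p) atTop (𝓝 0)
  have hdefect : Tendsto (fun x => 2 * β * ∑ p ∈ primesIoc x (x ^ β'), (g p - (h p).re) / p)
      atTop (𝓝 0) := by
    simpa using (tendsto_sum_primesIoc_zero (f := fun n => (g n - (h n).re) / n) hconv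
      (· ^ β')).const_mul (2 * β)
  have hmertens : ∀ᶠ x in atTop, ‖∑ p ∈ primesIoc x (x ^ β'), (1 : ℝ) / p‖ ≤ 8 * β' + 4 := by
    filter_upwards [eventually_ge_atTop 2] with x hx
    have hlogx : log x ≠ 0 := (log_pos (by linarith)).ne'
    rw [Real.norm_of_nonneg (sum_nonneg fun _ _ => by positivity)]
    calc _ ≤ 8 * log (x ^ β') / log x + 4 :=
          sum_inv_primesIoc_le hx (one_le_rpow (by linarith) (by linarith))
      _ = 8 * β' + 4 := by rw [log_rpow (by linarith)]; field_simp
  have hsq : Tendsto (fun x => (∑ p ∈ primesIoc x (x ^ β'), (h p).im / p) ^ 2) atTop (𝓝 0) :=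
    squeeze_zero (fun _ => sq_nonneg _)
      (fun x => sq_sum_im_div_le _ (fun _ _ => Nat.cast_nonneg _)
        (fun p hp => hhg p (mem_primesIoc.mp hp).1) (fun p hp => hgβ p (mem_primesIoc.mp hp).1))
      (hdefect.zero_mul_isBoundedUnder_le (isBoundedUnder_of_eventually_le hmertens))
  rw [tendsto_zero_iff_abs_tendsto_zero]
  simpa [Function.comp_def, sqrt_sq_eq_abs] using hsq.sqrt

theorem sum_im_tendsto_zero
    (β : ℝ) (hβ : 0 < β) (g : ℕ → ℝ) (h : ℕ → ℂ)
    (hg0 : ∀ p : ℕ, p.Prime → 0 ≤ g p)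
    (hgβ : ∀ p : ℕ, p.Prime → g p ≤ β)
    (hhg : ∀ p : ℕ, p.Prime → ‖h p‖ ≤ g p)
    (hconv : Summable (fun p : Nat.Primes => (g p - (h p).re) / (p : ℕ)))
    (β' : ℝ) (hβ' : 1 ≤ β') :
    Filter.Tendsto
      (fun x : ℝ =>
        ∑ p ∈ (Finset.range (⌊x ^ β'⌋₊ + 1)).filter
            (fun p => Nat.Prime p ∧ x < p ∧ (p : ℝ) ≤ x ^ β'),
          (h p).im / p)
      Filter.atTop (nhds 0) :=
  sum_im_tendsto_zero_general β g h hgβ hhg hconv β' hβ'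
end

section
/- Let g be a non-negative function on primes, bounded by β, such that the series Σ_p p^{-1}(g(p) − Re(h(p))) converges, where |h(p)| ≤ g(p). Then Σ_{p > x^ε} p^{-1−1/log x} |g(p) − h(p)| → 0 as x → ∞, for each fixed ε ∈ (0,1). -/
/-!
By `‖g - h‖² ≤ 2β (g - Re h)` and Cauchy–Schwarz, with `σ = 1 / log x` and `y = x ^ ε` the sum is
at most `(∑_{p > y} p^{-1-σ})^{1/2} (2β ∑_{p > y} (g(p) - Re h(p)) / p)^{1/2}`. The second factor is
the tail of a convergent series. For the first, Chebyshev's bound `θ(n) ≤ n log 4` says that the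
primes above `y` have density at most `log 4 / log y` in every initial segment of `ℕ`, so partial
summation against the decreasing weight `n^{-1-σ}` bounds it by
`(log 4 / log y) ζ(1 + σ) ≤ log 4 (1 + log x) / (ε log x)`, which is bounded.
-/

open Finset Filter Topology

theorem Complex.norm_ofReal_sub_sq_le {r β : ℝ} {z : ℂ} (hz : ‖z‖ ≤ r) (hr : r ≤ β) :
    ‖(r : ℂ) - z‖ ^ 2 ≤ 2 * β * (r - z.re) := by
  have hre : z.re ≤ r := (Complex.re_le_norm z).trans hz
  have hnorm : z.re * z.re + z.im * z.im ≤ r ^ 2 := by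
    rw [← Complex.normSq_apply, Complex.normSq_eq_norm_sq]
    exact pow_le_pow_left₀ (norm_nonneg z) hz 2
  rw [← Complex.normSq_eq_norm_sq, Complex.normSq_apply]
  simp only [Complex.sub_re, Complex.ofReal_re, Complex.sub_im, Complex.ofReal_im]
  nlinarith [mul_le_mul_of_nonneg_right hr (sub_nonneg.2 hre)]

theorem tsum_le_sqrt_tsum_mul_sqrt_tsum {ι : Type*} {a f g : ι → ℝ} (hf : Summable f)
    (hg : Summable g) (hf0 : ∀ i, 0 ≤ f i) (hg0 : ∀ i, 0 ≤ g i)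
    (ha : ∀ i, a i ≤ √(f i) * √(g i)) :
    ∑' i, a i ≤ √(∑' i, f i) * √(∑' i, g i) := by
  refine tsum_le_of_sum_le' (by positivity) fun s ↦ ?_
  calc ∑ i ∈ s, a i ≤ ∑ i ∈ s, √(f i) * √(g i) := sum_le_sum fun i _ ↦ ha i
    _ ≤ √(∑ i ∈ s, f i) * √(∑ i ∈ s, g i) := Real.sum_sqrt_mul_sqrt_le s hf0 hg0
    _ ≤ √(∑' i, f i) * √(∑' i, g i) := by
      gcongr
      · exact hf.sum_le_tsum s fun i _ ↦ hf0 i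
      · exact hg.sum_le_tsum s fun i _ ↦ hg0 i

theorem sum_range_mul_le_mul_sum_range {b G : ℕ → ℝ} {c : ℝ} (hG : Antitone G)
    (hG0 : ∀ n, 0 ≤ G n) (hb : ∀ n, ∑ k ∈ range n, b k ≤ c * n) (N : ℕ) :
    ∑ k ∈ range N, b k * G k ≤ c * ∑ k ∈ range N, G k := by
  -- Partial summation: the boundary term `(∑_{k<N} b k - c N) G N` is `≤ 0` by `hb`, and
  -- replacing `G N` by the smaller `G (N + 1)` in it can only increase it.
  suffices key : ∀ N, ∑ k ∈ range N, b k * G k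
      ≤ c * ∑ k ∈ range N, G k + (∑ k ∈ range N, b k - c * N) * G N by
    nlinarith [key N, hb N, hG0 N]
  intro N
  induction N with
  | zero => simp
  | succ N ih =>
    have hdefect : (∑ k ∈ range (N + 1), b k - c * ↑(N + 1)) * G N
        ≤ (∑ k ∈ range (N + 1), b k - c * ↑(N + 1)) * G (N + 1) :=
      mul_le_mul_of_nonpos_left (hG N.le_succ) (sub_nonpos.2 (hb _))
    simp only [sum_range_succ, Nat.cast_succ] at hdefect ⊢
    linarith

theorem tsum_nat_add_one_rpow_le {σ : ℝ} (hσ : 0 < σ) :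
    ∑' n : ℕ, ((n + 1 : ℕ) : ℝ) ^ (-1 - σ) ≤ 1 + 1 / σ := by
  have hanti : AntitoneOn (fun t : ℝ ↦ t ^ (-1 - σ)) (Set.Ici ((1 : ℕ) : ℝ)) :=
    fun s hs t _ hst ↦ Real.rpow_le_rpow_of_nonpos (by simp at hs; linarith) hst (by linarith)
  have hint : ∫ t in Set.Ioi ((1 : ℕ) : ℝ), t ^ (-1 - σ) = 1 / σ := by
    rw [Nat.cast_one, integral_Ioi_rpow_of_lt (by linarith) one_pos, Real.one_rpow,
      show -1 - σ + 1 = -σ by ring]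
    field_simp
  have htail := hanti.tsum_comp_add_le_integral 1
    (by simpa using integrableOn_Ioi_rpow_of_lt (by linarith : -1 - σ < -1) one_pos)
    fun t ht ↦ Real.rpow_nonneg (by simp at ht; linarith) _
  have hsum : Summable fun n : ℕ ↦ ((n + 1 : ℕ) : ℝ) ^ (-1 - σ) := by
    simpa using (summable_nat_add_iff 1).2 (Real.summable_nat_rpow.2 (by linarith : -1 - σ < -1))
  rw [hsum.tsum_eq_zero_add]
  simp only [zero_add, Nat.cast_one, Real.one_rpow] at htail ⊢
  linarith

theorem Chebyshev.theta_natCast_eq_sum_range (n : ℕ) :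
    Chebyshev.theta n = ∑ k ∈ range n, if (k + 1).Prime then Real.log (k + 1 : ℕ) else 0 := by
  rw [Chebyshev.theta, Nat.floor_natCast, sum_filter, ← Finset.Ico_add_one_add_one_eq_Ioc,
    range_eq_Ico]
  exact (sum_Ico_add' (fun k ↦ if k.Prime then Real.log k else 0) 0 n 1).symm

theorem sum_range_prime_gt_le {y : ℝ} (hy : 1 < y) (n : ℕ) :
    ∑ k ∈ range n, (if (k + 1).Prime ∧ y < (k + 1 : ℕ) then 1 else 0)
      ≤ Real.log 4 / Real.log y * n := by
  have hlog : 0 < Real.log y := Real.log_pos hy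
  calc ∑ k ∈ range n, (if (k + 1).Prime ∧ y < (k + 1 : ℕ) then 1 else 0)
      ≤ ∑ k ∈ range n, (if (k + 1).Prime then Real.log (k + 1 : ℕ) else 0) / Real.log y := by
        refine sum_le_sum fun k _ ↦ ?_
        split_ifs with h h'
        · rw [le_div_iff₀ hlog, one_mul]
          exact Real.log_le_log (by linarith) h.2.le
        · exact absurd h.1 h'
        · positivity
        · simp
    _ = Chebyshev.theta n / Real.log y := by
        rw [← sum_div, Chebyshev.theta_natCast_eq_sum_range]
    _ ≤ Real.log 4 * n / Real.log y := by
        gcongr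
        exact Chebyshev.theta_le_log4_mul_x n.cast_nonneg
    _ = Real.log 4 / Real.log y * n := by ring

theorem tsum_primes_rpow_gt_le {y σ : ℝ} (hy : 1 < y) (hσ : 0 < σ) :
    ∑' p : Nat.Primes, (if y < ((p : ℕ) : ℝ) then ((p : ℕ) : ℝ) ^ (-1 - σ) else 0)
      ≤ Real.log 4 / Real.log y * (1 + 1 / σ) := by
  set G : ℕ → ℝ := fun k ↦ ((k + 1 : ℕ) : ℝ) ^ (-1 - σ)
  set b : ℕ → ℝ := fun k ↦ if (k + 1).Prime ∧ y < (k + 1 : ℕ) then 1 else 0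
  have hG : Antitone G := fun m n hmn ↦
    Real.rpow_le_rpow_of_nonpos (by positivity) (by simpa using hmn) (by linarith)
  have hG0 : ∀ n, 0 ≤ G n := fun n ↦ by positivity
  have hb : ∀ n, 0 ≤ b n := fun n ↦ by positivity
  -- Indexing by `p - 1` makes the weight antitone on all of `ℕ`; `0 ^ (-1 - σ) = 0` would not be.
  have hreindex : ∑' p : Nat.Primes, (if y < ((p : ℕ) : ℝ) then ((p : ℕ) : ℝ) ^ (-1 - σ) else 0)
      = ∑' k, b k * G k := by
    have hinj : Function.Injective fun p : Nat.Primes ↦ (p : ℕ) - 1 := fun p q hpq ↦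
      Nat.Primes.coe_nat_injective <| by
        have := p.2.one_le; have := q.2.one_le; simp only at hpq; omega
    rw [← hinj.tsum_eq fun k hk ↦ ?_]
    · refine tsum_congr fun p ↦ ?_
      simp only [b, G, Nat.sub_add_cancel p.2.one_le, p.2, true_and, ite_mul, one_mul, zero_mul]
    · have hk : (k + 1).Prime := by
        by_contra h
        simp [b, h] at hk
      exact ⟨⟨k + 1, hk⟩, rfl⟩
  have hGsum : Summable G := by
    simpa [G] using (summable_nat_add_iff 1).2 (Real.summable_nat_rpow.2 (by linarith : -1 - σ < -1))
  have hc : 0 ≤ Real.log 4 / Real.log y :=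
    div_nonneg (Real.log_nonneg (by norm_num)) (Real.log_nonneg hy.le)
  rw [hreindex]
  refine Real.tsum_le_of_sum_range_le (fun n ↦ mul_nonneg (hb n) (hG0 n)) fun N ↦ ?_
  calc ∑ k ∈ range N, b k * G k ≤ Real.log 4 / Real.log y * ∑ k ∈ range N, G k :=
        sum_range_mul_le_mul_sum_range hG hG0 (sum_range_prime_gt_le hy) N
    _ ≤ Real.log 4 / Real.log y * ∑' k, G k := by
        gcongr
        exact hGsum.sum_le_tsum _ fun k _ ↦ hG0 k
    _ ≤ Real.log 4 / Real.log y * (1 + 1 / σ) := by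
        gcongr
        exact tsum_nat_add_one_rpow_le hσ

theorem Summable.tendsto_tsum_ite_lt_atTop_zero {ι : Type*} {f : ι → ℝ} (hf : Summable f)
    (φ : ι → ℝ) : Tendsto (fun y ↦ ∑' i, if y < φ i then f i else 0) atTop (𝓝 0) := by
  have hvanish (i : ι) : Tendsto (fun y ↦ if y < φ i then f i else 0) atTop (𝓝 0) :=
    tendsto_const_nhds.congr' <| (eventually_ge_atTop (φ i)).mono fun y hy ↦ by
      simp [not_lt.2 hy]
  simpa using tendsto_tsum_of_dominated_convergence hf.abs hvanish <| .of_forall fun y i ↦ by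
    split_ifs <;> simp

theorem tsum_primes_rpow_gt_rpow_le {ε x : ℝ} (hε : 0 < ε) (hx : Real.exp 1 ≤ x) :
    ∑' p : Nat.Primes, (if x ^ ε < ((p : ℕ) : ℝ) then ((p : ℕ) : ℝ) ^ (-1 - 1 / Real.log x) else 0)
      ≤ 2 * Real.log 4 / ε := by
  have hx1 : 1 < x := (Real.one_lt_exp_iff.2 one_pos).trans_le hx
  have hlog : 1 ≤ Real.log x := by simpa using Real.log_le_log (Real.exp_pos 1) hx
  refine (tsum_primes_rpow_gt_le (Real.one_lt_rpow hx1 hε) (by positivity)).trans ?_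
  rw [Real.log_rpow (by linarith), one_div_one_div, div_mul_eq_mul_div, div_le_div_iff₀
    (by positivity) hε]
  have := mul_nonneg (mul_nonneg (Real.log_nonneg (by norm_num : (1 : ℝ) ≤ 4)) hε.le)
    (sub_nonneg.2 hlog)
  linarith

theorem tsum_primes_rpow_mul_norm_sub_le {β y σ : ℝ} (hσ : 0 < σ) {g : ℕ → ℝ} {h : ℕ → ℂ}
    (hgβ : ∀ p : ℕ, p.Prime → g p ≤ β) (hhg : ∀ p : ℕ, p.Prime → ‖h p‖ ≤ g p)
    (hconv : Summable (fun p : Nat.Primes => (g p - (h p).re) / (p : ℕ))) :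
    ∑' p : Nat.Primes, (if y < ((p : ℕ) : ℝ) then
        ((p : ℕ) : ℝ) ^ (-1 - σ) * ‖(g (p : ℕ) : ℂ) - h (p : ℕ)‖ else 0)
      ≤ √(∑' p : Nat.Primes, if y < ((p : ℕ) : ℝ) then ((p : ℕ) : ℝ) ^ (-1 - σ) else 0)
        * √(2 * β * ∑' p : Nat.Primes,
            if y < ((p : ℕ) : ℝ) then (g p - (h p).re) / (p : ℕ) else 0) := by
  have hsq (p : Nat.Primes) : ‖(g (p : ℕ) : ℂ) - h (p : ℕ)‖ ^ 2 ≤ 2 * β * (g p - (h p).re) :=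
    Complex.norm_ofReal_sub_sq_le (hhg p p.2) (hgβ p p.2)
  have hdefect_nonneg (p : Nat.Primes) : 0 ≤ 2 * β * ((g p - (h p).re) / (p : ℕ)) := by
    rw [← mul_div_assoc]
    exact div_nonneg ((sq_nonneg _).trans (hsq p)) (Nat.cast_nonneg _)
  have hw (p : Nat.Primes) : ((p : ℕ) : ℝ) ^ (-1 - σ) ≤ ((p : ℕ) : ℝ)⁻¹ := by
    rw [← Real.rpow_neg_one]
    exact Real.rpow_le_rpow_of_exponent_le (mod_cast p.2.one_le) (by linarith)
  rw [← tsum_mul_left]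
  refine tsum_le_sqrt_tsum_mul_sqrt_tsum ?_ ?_ (fun p ↦ ?_) (fun p ↦ ?_) fun p ↦ ?_
  · refine .of_nonneg_of_le (fun p ↦ by split_ifs <;> positivity) (fun p ↦ ?_)
      (Nat.Primes.summable_rpow.2 (by linarith : -1 - σ < -1))
    split_ifs
    exacts [le_rfl, by positivity]
  · refine .of_nonneg_of_le (fun p ↦ ?_) (fun p ↦ ?_) (hconv.mul_left (2 * β))
    · split_ifs <;> simp [hdefect_nonneg]
    · split_ifs <;> simp [hdefect_nonneg]
  · split_ifs <;> positivity
  · split_ifs <;> simp [hdefect_nonneg]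
  split_ifs with hyp
  · set w := ((p : ℕ) : ℝ) ^ (-1 - σ)
    have hw0 : 0 ≤ w := by positivity
    calc w * ‖(g (p : ℕ) : ℂ) - h (p : ℕ)‖
        = √w * √(w * ‖(g (p : ℕ) : ℂ) - h (p : ℕ)‖ ^ 2) := by
          rw [Real.sqrt_mul hw0, Real.sqrt_sq (norm_nonneg _), ← mul_assoc, Real.mul_self_sqrt hw0]
      _ ≤ √w * √(2 * β * ((g p - (h p).re) / (p : ℕ))) := by
          refine mul_le_mul_of_nonneg_left (Real.sqrt_le_sqrt ?_) (Real.sqrt_nonneg w)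
          rw [mul_comm, div_eq_mul_inv, ← mul_assoc]
          exact mul_le_mul (hsq p) (hw p) hw0 ((sq_nonneg _).trans (hsq p))
  · simp

theorem tsum_abs_diff_tendsto_zero_general
    (β : ℝ) (g : ℕ → ℝ) (h : ℕ → ℂ)
    (hgβ : ∀ p : ℕ, p.Prime → g p ≤ β)
    (hhg : ∀ p : ℕ, p.Prime → ‖h p‖ ≤ g p)
    (hconv : Summable (fun p : Nat.Primes => (g p - (h p).re) / (p : ℕ)))
    (ε : ℝ) (hε0 : 0 < ε) :
    Filter.Tendsto
      (fun x : ℝ =>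
        ∑' p : Nat.Primes,
          (if x ^ ε < ((p : ℕ) : ℝ) then
            ((p : ℕ) : ℝ) ^ (-1 - 1 / Real.log x) *
              ‖(g (p : ℕ) : ℂ) - h (p : ℕ)‖ else 0))
      Filter.atTop (nhds 0) := by
  have htail := (hconv.tendsto_tsum_ite_lt_atTop_zero fun p : Nat.Primes ↦ ((p : ℕ) : ℝ)).comp
    (tendsto_rpow_atTop hε0)
  have hbound := (tendsto_const_nhds (x := √(2 * Real.log 4 / ε))).mul
    (htail.const_mul (2 * β)).sqrt
  rw [mul_zero, Real.sqrt_zero, mul_zero] at hbound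
  refine tendsto_of_tendsto_of_tendsto_of_le_of_le' tendsto_const_nhds hbound
    (.of_forall fun x ↦ tsum_nonneg fun p ↦ by split_ifs <;> positivity) ?_
  filter_upwards [eventually_ge_atTop (Real.exp 1)] with x hx
  have hlog : 0 < Real.log x := Real.log_pos ((Real.one_lt_exp_iff.2 one_pos).trans_le hx)
  refine (tsum_primes_rpow_mul_norm_sub_le (one_div_pos.2 hlog) hgβ hhg hconv).trans ?_
  exact mul_le_mul_of_nonneg_right
    (Real.sqrt_le_sqrt (tsum_primes_rpow_gt_rpow_le hε0 hx)) (Real.sqrt_nonneg _)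

theorem tsum_abs_diff_tendsto_zero
    (β : ℝ) (hβ : 0 < β) (g : ℕ → ℝ) (h : ℕ → ℂ)
    (hg0 : ∀ p : ℕ, p.Prime → 0 ≤ g p)
    (hgβ : ∀ p : ℕ, p.Prime → g p ≤ β)
    (hhg : ∀ p : ℕ, p.Prime → ‖h p‖ ≤ g p)
    (hconv : Summable (fun p : Nat.Primes => (g p - (h p).re) / (p : ℕ)))
    (ε : ℝ) (hε0 : 0 < ε) (hε1 : ε < 1) :
    Filter.Tendsto
      (fun x : ℝ =>
        ∑' p : Nat.Primes,
          (if x ^ ε < ((p : ℕ) : ℝ) then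
            ((p : ℕ) : ℝ) ^ (-1 - 1 / Real.log x) *
              ‖(g (p : ℕ) : ℂ) - h (p : ℕ)‖ else 0))
      Filter.atTop (nhds 0) :=
  tsum_abs_diff_tendsto_zero_general β g h hgβ hhg hconv ε hε0
end

section
/- Let g be a function on primes with 0 ≤ g(p) ≤ β such that for each ε ∈ (0,1), liminf_{x→∞} (ε log x)^{-1} Σ_{x^{1−ε} < p ≤ x} g(p)(log p)/p ≥ c > 0. Then for each α with 0 < α < c there is a set R of primes such that Σ_{r ∈ R, r ≤ x} g(r)(log r)/r ∼ α log x as x → ∞. -/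
/-!
Choose primes greedily: `p` joins `R` exactly when this keeps the running sum of
`g r log r / r` below `α log p`. The sum up to `x` then never exceeds `α log x`.
Conversely, fix `a < α` and `ε` with `a < α (1 - ε)`. While the sum up to `x` stays below
`a log x`, every prime of the window `(x ^ (1 - ε), x]` still fits, since its weight is at most
`β = o(log x)`; so the window contributes all of its mass, which exceeds `α ε log x`. Hence a
lower bound `m log y` at `y = x ^ (1 - ε)` improves to `min a ((1 - ε) m + ε α) log x`, and
iterating this affine map, whose fixed point `α` exceeds `a`, reaches `a` in finitely many steps.
-/

open Finset Filter Real Topology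

section GreedySet

variable (P : ℕ → Prop) (w T : ℕ → ℝ)

open scoped Classical in
noncomputable def greedySet : ℕ → Finset ℕ
  | 0 => ∅
  | n + 1 =>
    if P n ∧ ∑ m ∈ greedySet n, w m + w n ≤ T n then insert n (greedySet n) else greedySet n

variable {P w T}

theorem greedySet_subset_range (n : ℕ) : greedySet P w T n ⊆ range n := by
  induction n with
  | zero => simp [greedySet]
  | succ n ih =>
    rw [greedySet, range_add_one]
    split
    · exact insert_subset_insert n ih
    · exact ih.trans (subset_insert n _)

theorem greedySet_subset_succ (n : ℕ) : greedySet P w T n ⊆ greedySet P w T (n + 1) := by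
  rw [greedySet]
  split
  · exact subset_insert n _
  · exact subset_rfl

theorem mem_greedySet_succ_self {p : ℕ} (hp : P p)
    (h : ∑ m ∈ greedySet P w T p, w m + w p ≤ T p) : p ∈ greedySet P w T (p + 1) := by
  rw [greedySet, if_pos ⟨hp, h⟩]
  exact mem_insert_self p _

theorem monotone_greedySet : Monotone (greedySet P w T) :=
  monotone_nat_of_le_succ greedySet_subset_succ

theorem mem_greedySet_iff {m n : ℕ} :
    m ∈ greedySet P w T n ↔ m < n ∧ m ∈ greedySet P w T (m + 1) := by
  refine ⟨fun h => ⟨mem_range.1 (greedySet_subset_range n h), ?_⟩,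
    fun ⟨hmn, h⟩ => monotone_greedySet hmn h⟩
  induction n with
  | zero => simp [greedySet] at h
  | succ n ih =>
    rw [greedySet] at h
    split at h
    · rcases mem_insert.1 h with rfl | h
      · exact mem_greedySet_succ_self ‹_ ∧ _›.1 ‹_ ∧ _›.2
      · exact ih h
    · exact ih h

theorem filter_mem_greedySet_succ_range (n : ℕ) :
    (range n).filter (fun m => m ∈ greedySet P w T (m + 1)) = greedySet P w T n := by
  ext m
  rw [mem_filter, mem_range]
  exact mem_greedySet_iff.symm

theorem of_mem_greedySet {m n : ℕ} (h : m ∈ greedySet P w T n) : P m := by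
  induction n with
  | zero => simp [greedySet] at h
  | succ n ih =>
    rw [greedySet] at h
    split at h
    · rcases mem_insert.1 h with rfl | h
      · exact (by assumption : P m ∧ _).1
      · exact ih h
    · exact ih h

theorem sum_greedySet_le (hT : Monotone T) (hT0 : 0 ≤ T 0) (n : ℕ) :
    ∑ m ∈ greedySet P w T n, w m ≤ T n := by
  induction n with
  | zero => simpa [greedySet] using hT0
  | succ n ih =>
    refine le_trans ?_ (hT n.le_succ)
    rw [greedySet]
    split
    · rename_i h
      rw [sum_insert fun hn => (mem_range.1 (greedySet_subset_range n hn)).false, add_comm]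
      exact h.2
    · exact ih

variable (hw : ∀ m, P m → 0 ≤ w m)
include hw

theorem sum_greedySet_nonneg (n : ℕ) : 0 ≤ ∑ m ∈ greedySet P w T n, w m :=
  sum_nonneg fun _ hm => hw _ (of_mem_greedySet hm)

theorem sum_greedySet_mono : Monotone fun n => ∑ m ∈ greedySet P w T n, w m :=
  fun _ _ hNM => sum_le_sum_of_subset_of_nonneg (monotone_greedySet hNM)
    fun _ hm _ => hw _ (of_mem_greedySet hm)

theorem sum_greedySet_add_sum_le {N M : ℕ} {s : Finset ℕ} (hNM : N ≤ M) (hs : s ⊆ Ico N M)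
    (hsel : ∀ p ∈ s, p ∈ greedySet P w T (p + 1)) :
    ∑ m ∈ greedySet P w T N, w m + ∑ m ∈ s, w m ≤ ∑ m ∈ greedySet P w T M, w m := by
  have hdisj : Disjoint (greedySet P w T N) s := by
    refine disjoint_left.2 fun p hpN hps => ?_
    exact (mem_range.1 (greedySet_subset_range N hpN)).not_ge (mem_Ico.1 (hs hps)).1
  have hsub : greedySet P w T N ∪ s ⊆ greedySet P w T M := by
    refine union_subset (monotone_greedySet hNM) fun p hp => ?_
    exact mem_greedySet_iff.2 ⟨(mem_Ico.1 (hs hp)).2, hsel p hp⟩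
  rw [← sum_union hdisj]
  exact sum_le_sum_of_subset_of_nonneg hsub fun _ hm _ => hw _ (of_mem_greedySet hm)

end GreedySet

theorem Antitone.of_affine_step {Q : ℝ → Prop} (hQ : Antitone Q) {A C ε : ℝ} (hε : 0 < ε)
    (hAC : A < C) (h0 : Q 0) (hstep : ∀ m, Q m → Q (min A ((1 - ε) * m + ε * C))) : Q A := by
  set d := ε * (C - A)
  have hd0 : 0 < d := mul_pos hε (sub_pos.2 hAC)
  have hiter : ∀ j : ℕ, Q (min A (j * d)) := by
    intro j
    induction j with
    | zero => exact hQ (by simp) h0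
    | succ j ih =>
      refine hQ (le_min (min_le_left _ _) ?_) (hstep _ ih)
      -- each step gains at least `d`, because the iterate stays below `A`
      have hgain : min A (j * d) + d ≤ (1 - ε) * min A (j * d) + ε * C := by
        nlinarith [min_le_left A (j * d)]
      calc min A ((j + 1 : ℕ) * d) ≤ min (A + d) (j * d + d) := by
            push_cast
            exact min_le_min (by linarith) (by linarith)
        _ = min A (j * d) + d := min_add_add_right A _ d
        _ ≤ _ := hgain
  obtain ⟨j, hj⟩ := exists_nat_ge (A / d)
  simpa [min_eq_left ((div_le_iff₀ hd0).1 hj)] using hiter j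

theorem tendsto_div_of_forall_eventually_le {ι : Type*} {l : Filter ι} {s L : ι → ℝ} {α : ℝ}
    (hL : ∀ᶠ x in l, 0 < L x) (hlow : ∀ a < α, ∀ᶠ x in l, a * L x ≤ s x)
    (hup : ∀ a > α, ∀ᶠ x in l, s x ≤ a * L x) : Tendsto (fun x => s x / L x) l (𝓝 α) := by
  refine tendsto_order.2 ⟨fun b hb => ?_, fun b hb => ?_⟩
  · obtain ⟨a, hba, haα⟩ := exists_between hb
    filter_upwards [hL, hlow a haα] with x hLx hx
    exact hba.trans_le ((le_div_iff₀ hLx).2 hx)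
  · obtain ⟨a, hαa, hab⟩ := exists_between hb
    filter_upwards [hL, hup a hαa] with x hLx hx
    exact ((div_le_iff₀ hLx).2 hx).trans_lt hab

section ChosenPrimes

variable (g : ℕ → ℝ) (α : ℝ)

noncomputable def primeWeight (p : ℕ) : ℝ := g p * log p / p

noncomputable def chosenPrimes : ℕ → Finset ℕ :=
  greedySet Nat.Prime (primeWeight g) (fun n => α * log n)

noncomputable def chosenSum (x : ℝ) : ℝ :=
  ∑ p ∈ chosenPrimes g α (⌊x⌋₊ + 1), primeWeight g p

noncomputable def windowPrimes (ε x : ℝ) : Finset ℕ :=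
  (range (⌊x⌋₊ + 1)).filter (fun p => Nat.Prime p ∧ x ^ (1 - ε) < p ∧ (p : ℝ) ≤ x)

variable {g α}

theorem primeWeight_nonneg {p : ℕ} (hp : 0 ≤ g p) : 0 ≤ primeWeight g p := by
  unfold primeWeight
  have := log_natCast_nonneg p
  positivity

theorem primeWeight_le {p : ℕ} (hp : 0 ≤ g p) : primeWeight g p ≤ g p := by
  rcases p.eq_zero_or_pos with rfl | hp0
  · simpa [primeWeight] using hp
  have hp0' : (0 : ℝ) < p := Nat.cast_pos.2 hp0
  rw [primeWeight, div_le_iff₀ hp0']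
  exact mul_le_mul_of_nonneg_left (log_le_self hp0'.le) hp

theorem monotone_mul_log_natCast (hα : 0 ≤ α) : Monotone fun n : ℕ => α * log n := by
  intro m n hmn
  rcases m.eq_zero_or_pos with rfl | hm
  · simpa using mul_nonneg hα (log_natCast_nonneg n)
  exact mul_le_mul_of_nonneg_left (log_le_log (by positivity) (by exact_mod_cast hmn)) hα

theorem eventually_chosenSum_le_mul_log (hα : 0 ≤ α) {a : ℝ} (ha : α < a) :
    ∀ᶠ x in atTop, chosenSum g α x ≤ a * log x := by
  filter_upwards [eventually_ge_atTop 1,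
    tendsto_log_atTop.eventually_ge_atTop (α * log 2 / (a - α))] with x hx1 hlogx
  have hfloor : ((⌊x⌋₊ + 1 : ℕ) : ℝ) ≤ 2 * x := by
    push_cast
    linarith [Nat.floor_le (zero_le_one.trans hx1)]
  calc chosenSum g α x ≤ α * log (⌊x⌋₊ + 1 : ℕ) :=
        sum_greedySet_le (monotone_mul_log_natCast hα) (by simp) _
    _ ≤ α * log (2 * x) := mul_le_mul_of_nonneg_left (log_le_log (by positivity) hfloor) hα
    _ = α * log 2 + α * log x := by rw [log_mul two_ne_zero (by positivity)]; ring
    _ ≤ a * log x := by nlinarith [(div_le_iff₀ (sub_pos.2 ha)).1 hlogx]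

variable (hg0 : ∀ p : ℕ, p.Prime → 0 ≤ g p)
include hg0

theorem chosenSum_nonneg (x : ℝ) : 0 ≤ chosenSum g α x :=
  sum_greedySet_nonneg (fun p hp => primeWeight_nonneg (hg0 p hp)) _

theorem self_mem_chosenPrimes_succ {p : ℕ} {x : ℝ} (hp : p.Prime) (hpx : (p : ℝ) ≤ x)
    (h : chosenSum g α x + g p ≤ α * log p) : p ∈ chosenPrimes g α (p + 1) := by
  refine mem_greedySet_succ_self hp (le_trans ?_ h)
  have hpM : p ≤ ⌊x⌋₊ + 1 := (Nat.le_floor hpx).trans (Nat.le_succ _)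
  exact add_le_add (sum_greedySet_mono (fun q hq => primeWeight_nonneg (hg0 q hq)) hpM)
    (primeWeight_le (hg0 p hp))

theorem eventually_mul_lt_sum_windowPrimes {a c ε : ℝ} (hε : 0 < ε) (ha : a < c)
    (hc : c ≤ liminf (fun x : ℝ => (ε * log x)⁻¹ * ∑ p ∈ windowPrimes ε x, primeWeight g p)
      atTop) :
    ∀ᶠ x in atTop, a * (ε * log x) < ∑ p ∈ windowPrimes ε x, primeWeight g p := by
  have hbdd : IsBoundedUnder (· ≥ ·) atTop
      fun x : ℝ => (ε * log x)⁻¹ * ∑ p ∈ windowPrimes ε x, primeWeight g p := by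
    refine isBoundedUnder_of_eventually_ge (a := 0) ?_
    filter_upwards [eventually_ge_atTop 1] with x hx1
    have := log_nonneg hx1
    exact mul_nonneg (by positivity)
      (sum_nonneg fun p hp => primeWeight_nonneg (hg0 p (mem_filter.1 hp).2.1))
  filter_upwards [eventually_lt_of_lt_liminf (ha.trans_le hc) hbdd, eventually_gt_atTop 1]
    with x hx hx1
  rwa [inv_mul_eq_div, lt_div_iff₀ (mul_pos hε (log_pos hx1))] at hx

variable {β : ℝ} (hgβ : ∀ p : ℕ, p.Prime → g p ≤ β)
include hgβ

theorem eventually_min_mul_log_le_chosenSum (hα : 0 ≤ α) {a ε : ℝ} (hε : 0 < ε)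
    (haε : a < α * (1 - ε))
    (hwin : ∀ᶠ x in atTop, α * (ε * log x) ≤ ∑ p ∈ windowPrimes ε x, primeWeight g p) :
    ∀ᶠ x in atTop, ∀ m, m * log (x ^ (1 - ε)) ≤ chosenSum g α (x ^ (1 - ε)) →
      min a ((1 - ε) * m + ε * α) * log x ≤ chosenSum g α x := by
  filter_upwards [hwin, eventually_ge_atTop 1,
    tendsto_log_atTop.eventually_ge_atTop (β / (α * (1 - ε) - a))] with x hwinx hx1 hlogx m hm
  have hx0 : 0 < x := zero_lt_one.trans_le hx1
  have hlog : 0 ≤ log x := log_nonneg hx1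
  have hlogy : log (x ^ (1 - ε)) = (1 - ε) * log x := log_rpow hx0 _
  by_cases hax : a * log x ≤ chosenSum g α x
  · exact (mul_le_mul_of_nonneg_right (min_le_left _ _) hlog).trans hax
  rw [not_le] at hax
  -- below `a * log x` there is room for every window prime, as `g p ≤ β` is eventually small
  have hsel : ∀ p ∈ windowPrimes ε x, p ∈ chosenPrimes g α (p + 1) := by
    intro p hp
    obtain ⟨-, hp, hyp, hpx⟩ := mem_filter.1 hp
    refine self_mem_chosenPrimes_succ hg0 hp hpx ?_
    have hlogp : (1 - ε) * log x < log p := hlogy ▸ log_lt_log (by positivity) hyp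
    nlinarith [hgβ p hp, (div_le_iff₀ (sub_pos.2 haε)).1 hlogx]
  have hwindow : windowPrimes ε x ⊆ Ico (⌊x ^ (1 - ε)⌋₊ + 1) (⌊x⌋₊ + 1) := by
    intro p hp
    obtain ⟨hpM, -, hyp, -⟩ := mem_filter.1 hp
    exact mem_Ico.2 ⟨(Nat.floor_lt (by positivity)).2 hyp, mem_range.1 hpM⟩
  have hyx : x ^ (1 - ε) ≤ x := by
    simpa using rpow_le_rpow_of_exponent_le hx1 (by linarith : 1 - ε ≤ 1)
  calc min a ((1 - ε) * m + ε * α) * log x ≤ ((1 - ε) * m + ε * α) * log x :=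
        mul_le_mul_of_nonneg_right (min_le_right _ _) hlog
    _ = m * log (x ^ (1 - ε)) + α * (ε * log x) := by rw [hlogy]; ring
    _ ≤ chosenSum g α (x ^ (1 - ε)) + ∑ p ∈ windowPrimes ε x, primeWeight g p :=
        add_le_add hm hwinx
    _ ≤ chosenSum g α x :=
        sum_greedySet_add_sum_le (fun q hq => primeWeight_nonneg (hg0 q hq))
          (by gcongr) hwindow hsel

theorem eventually_mul_log_le_chosenSum (hα : 0 < α)
    (hwin : ∀ ε : ℝ, 0 < ε → ε < 1 →
      ∀ᶠ x in atTop, α * (ε * log x) ≤ ∑ p ∈ windowPrimes ε x, primeWeight g p)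
    {a : ℝ} (ha : a < α) : ∀ᶠ x in atTop, a * log x ≤ chosenSum g α x := by
  let Q : ℝ → Prop := fun m => ∀ᶠ x in atTop, m * log x ≤ chosenSum g α x
  have hQ : Antitone Q := fun m m' hmm' hm' => by
    filter_upwards [hm', eventually_ge_atTop 1] with x hx hx1
    exact (mul_le_mul_of_nonneg_right hmm' (log_nonneg hx1)).trans hx
  have hQ0 : Q 0 := Eventually.of_forall fun x => by simpa using chosenSum_nonneg hg0 x
  suffices Q (max a (α / 2)) from hQ (le_max_left _ _) this
  set a' := max a (α / 2)
  have ha'α : a' < α := max_lt ha (by linarith)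
  have ha'0 : 0 < a' := (half_pos hα).trans_le (le_max_right _ _)
  set ε := (α - a') / (2 * α)
  have hε0 : 0 < ε := div_pos (by linarith) (by linarith)
  have hε1 : ε < 1 := (div_lt_one (by linarith)).2 (by linarith)
  have ha'ε : a' < α * (1 - ε) := by
    have : α * (1 - ε) = (α + a') / 2 := by simp only [ε]; field_simp; ring
    linarith
  refine hQ.of_affine_step hε0 ha'α hQ0 fun m hm => ?_
  filter_upwards [eventually_min_mul_log_le_chosenSum hg0 hgβ hα.le hε0 ha'ε (hwin ε hε0 hε1),
    (tendsto_rpow_atTop (by linarith : 0 < 1 - ε)).eventually hm] with x hstep hmx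
  exact hstep m hmx

end ChosenPrimes

open scoped Classical in
theorem exists_subsequence_of_primes_general
    (β c : ℝ) (g : ℕ → ℝ)
    (hg0 : ∀ p : ℕ, p.Prime → 0 ≤ g p)
    (hgβ : ∀ p : ℕ, p.Prime → g p ≤ β)
    (hliminf : ∀ ε : ℝ, 0 < ε → ε < 1 →
      c ≤ Filter.liminf
        (fun x : ℝ => (ε * Real.log x)⁻¹ *
          ∑ p ∈ (Finset.range (⌊x⌋₊ + 1)).filter
              (fun p => Nat.Prime p ∧ x ^ (1 - ε) < p ∧ (p : ℝ) ≤ x),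
            g p * Real.log p / p)
        Filter.atTop)
    (α : ℝ) (hα0 : 0 < α) (hαc : α < c) :
    ∃ R : Set ℕ, (∀ r ∈ R, Nat.Prime r) ∧
      Filter.Tendsto
        (fun x : ℝ =>
          (∑ r ∈ (Finset.range (⌊x⌋₊ + 1)).filter (fun r => r ∈ R),
            g r * Real.log r / r) / (α * Real.log x))
        Filter.atTop (nhds 1) := by
  have hwin (ε : ℝ) (hε0 : 0 < ε) (hε1 : ε < 1) :
      ∀ᶠ x in atTop, α * (ε * log x) ≤ ∑ p ∈ windowPrimes ε x, primeWeight g p :=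
    (eventually_mul_lt_sum_windowPrimes hg0 hε0 hαc (hliminf ε hε0 hε1)).mono fun _ h => h.le
  have hlim : Tendsto (fun x => chosenSum g α x / log x) atTop (𝓝 α) :=
    tendsto_div_of_forall_eventually_le (tendsto_log_atTop.eventually_gt_atTop 0)
      (fun _ ha => eventually_mul_log_le_chosenSum hg0 hgβ hα0 hwin ha)
      (fun _ ha => eventually_chosenSum_le_mul_log hα0.le ha)
  refine ⟨{p | p ∈ chosenPrimes g α (p + 1)}, fun p hp => of_mem_greedySet hp, ?_⟩
  convert hlim.div_const α using 2 with x
  · rw [div_div, mul_comm α, chosenSum, chosenPrimes, ← filter_mem_greedySet_succ_range]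
    congr 2
    ext p
    simp only [mem_filter, Set.mem_ofPred_eq]
  · exact (div_self hα0.ne').symm

open scoped Classical in
theorem exists_subsequence_of_primes
    (β c : ℝ) (hβ : 0 < β) (hc : 0 < c) (g : ℕ → ℝ)
    (hg0 : ∀ p : ℕ, p.Prime → 0 ≤ g p)
    (hgβ : ∀ p : ℕ, p.Prime → g p ≤ β)
    (hliminf : ∀ ε : ℝ, 0 < ε → ε < 1 →
      c ≤ Filter.liminf
        (fun x : ℝ => (ε * Real.log x)⁻¹ *
          ∑ p ∈ (Finset.range (⌊x⌋₊ + 1)).filter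
              (fun p => Nat.Prime p ∧ x ^ (1 - ε) < p ∧ (p : ℝ) ≤ x),
            g p * Real.log p / p)
        Filter.atTop)
    (α : ℝ) (hα0 : 0 < α) (hαc : α < c) :
    ∃ R : Set ℕ, (∀ r ∈ R, Nat.Prime r) ∧
      Filter.Tendsto
        (fun x : ℝ =>
          (∑ r ∈ (Finset.range (⌊x⌋₊ + 1)).filter (fun r => r ∈ R),
            g r * Real.log r / r) / (α * Real.log x))
        Filter.atTop (nhds 1) :=
  exists_subsequence_of_primes_general β c g hg0 hgβ hliminf α hα0 hαc
end
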